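/- arXiv:2109.03584 — 4 statements merged into one kernel-verified Lean document; each statement's English description precedes it below -/
import Mathlib

section
/- Let u : ℝ × ℝ → ℝ be a smooth, rapidly decaying solution of u_t + (u_xx + u^3)_x = 0 and let f : ℝ → ℝ be a C^2 function with bounded derivatives, independent of time. Then d/dt [(1/2)∫_ℝ u^2 f dx] = ∫_ℝ (−(3/2)u_x^2 + (3/4)u^4) f' dx − ∫_ℝ u_x u f'' dx. -/
open MeasureTheory Filter Topology

private lemma L1 (g g' : ℝ → ℝ) (hg : ∀ x, HasDerivAt g (g' x) x)
    (hint : Integrable g') (htop : Tendsto g atTop (𝓝 0))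
    (hbot : Tendsto g atBot (𝓝 0)) : ∫ x, g' x = 0 := by
  have h1 : Tendsto (fun R : ℝ => ∫ x in (-R)..R, g' x) atTop (𝓝 (∫ x, g' x)) :=
    intervalIntegral_tendsto_integral hint tendsto_neg_atTop_atBot tendsto_id
  have h2 : ∀ R : ℝ, ∫ x in (-R)..R, g' x = g R - g (-R) := fun R =>
    intervalIntegral.integral_eq_sub_of_hasDerivAt (fun x _ => hg x)
      (hint.intervalIntegrable)
  have h3 : Tendsto (fun R : ℝ => g R - g (-R)) atTop (𝓝 0) := by
    simpa using htop.sub (hbot.comp tendsto_neg_atTop_atBot)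
  rw [funext h2] at h1
  exact tendsto_nhds_unique h1 h3

private lemma Ldecint (h : ℝ → ℝ) (hc : Continuous h) (C : ℝ)
    (hC : ∀ x, |h x| * (1 + |x|) ^ 2 ≤ C) : Integrable h := by
  refine ((integrable_inv_one_add_sq).const_mul C).mono' hc.aestronglyMeasurable ?_
  refine Filter.Eventually.of_forall fun x => ?_
  have h1 : (0:ℝ) < 1 + x ^ 2 := by positivity
  have h2 : 1 + x ^ 2 ≤ (1 + |x|) ^ 2 := by nlinarith [abs_nonneg x, sq_abs x]
  rw [Real.norm_eq_abs, mul_comm C, ← div_eq_inv_mul, le_div_iff₀ h1]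
  calc |h x| * (1 + x ^ 2) ≤ |h x| * (1 + |x|) ^ 2 :=
        mul_le_mul_of_nonneg_left h2 (abs_nonneg _)
    _ ≤ C := hC x

private lemma Ldec0 (h : ℝ → ℝ) (C : ℝ) (hC : ∀ x, |h x| * (1 + |x|) ≤ C) :
    Tendsto h atTop (𝓝 0) ∧ Tendsto h atBot (𝓝 0) := by
  have hb : ∀ (l : Filter ℝ), Tendsto (fun x : ℝ => |x|) l atTop →
      Tendsto h l (𝓝 0) := by
    intro l hl
    apply squeeze_zero_norm (a := fun x : ℝ => C * (1 + |x|)⁻¹)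
    · intro x
      have h1 : (0:ℝ) < 1 + |x| := by positivity
      rw [Real.norm_eq_abs, mul_comm C, ← div_eq_inv_mul, le_div_iff₀ h1]
      exact hC x
    · have : Tendsto (fun x : ℝ => (1 + |x|)⁻¹) l (𝓝 0) :=
        (tendsto_inv_atTop_zero).comp (tendsto_atTop_add_const_left _ 1 hl)
      simpa using this.const_mul C
  exact ⟨hb _ tendsto_abs_atTop_atTop, hb _ tendsto_abs_atBot_atTop⟩

private lemma Lsup {g : ℝ → ℝ} {D : ℝ} (h : ∀ x, |g x| * (1 + |x|) ^ 2 ≤ D) :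
    (∀ x, |g x| ≤ D) ∧ (∀ x, |g x| * (1 + |x|) ≤ D) := by
  constructor <;> intro x <;>
    nlinarith [h x, abs_nonneg (g x), abs_nonneg x, sq_nonneg x,
      mul_nonneg (abs_nonneg (g x)) (abs_nonneg x),
      mul_nonneg (mul_nonneg (abs_nonneg (g x)) (abs_nonneg x)) (abs_nonneg x)]

private lemma Linv {a C x : ℝ} (h : |a| * (1 + |x|) ^ 2 ≤ C) :
    |a| ≤ C * (1 + x ^ 2)⁻¹ := by
  have h1 : (0:ℝ) < 1 + x ^ 2 := by positivity
  rw [mul_comm C, ← div_eq_inv_mul, le_div_iff₀ h1]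
  nlinarith [abs_nonneg a, abs_nonneg x, sq_abs x,
    mul_nonneg (abs_nonneg a) (abs_nonneg x)]

private lemma abs4 (a b c d : ℝ) : |a + b - c + d| ≤ |a| + |b| + |c| + |d| := by
  have h1 := abs_add_le (a + b - c) d
  have h2 := abs_sub (a + b) c
  have h3 := abs_add_le a b
  linarith

set_option maxHeartbeats 1000000 in
theorem localized_mass_evolution (u : ℝ → ℝ → ℝ)
    (hu : ContDiff ℝ (⊤ : ℕ∞) (Function.uncurry u))
    (hPDE : ∀ t x : ℝ,
      deriv (fun s : ℝ => u s x) t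
        + deriv (fun y : ℝ => deriv (deriv (u t)) y + (u t y) ^ 3) x = 0)
    (hdecay : ∀ n k : ℕ, ∃ C : ℝ, ∀ t x : ℝ,
      |iteratedDeriv k (u t) x| * (1 + |x|) ^ n ≤ C)
    (hdecayt : ∀ n : ℕ, ∃ C : ℝ, ∀ t x : ℝ,
      |deriv (fun s : ℝ => u s x) t| * (1 + |x|) ^ n ≤ C)
    (f : ℝ → ℝ) (hf : ContDiff ℝ 2 f)
    (hfb : ∃ C : ℝ, ∀ x : ℝ, |f x| + |deriv f x| + |deriv (deriv f) x| ≤ C) :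
    ∀ t : ℝ,
      HasDerivAt (fun s : ℝ => (1 / 2) * ∫ x : ℝ, (u s x) ^ 2 * f x)
        ((∫ x : ℝ, (-(3 / 2) * (deriv (u t) x) ^ 2 + (3 / 4) * (u t x) ^ 4) * deriv f x)
          - ∫ x : ℝ, deriv (u t) x * u t x * deriv (deriv f) x) t := by
  -- f facts
  obtain ⟨Cf', hCf'⟩ := hfb
  have hf0 : ∀ x, |f x| ≤ |Cf'| + 1 := fun x => by
    have := hCf' x; have := abs_nonneg (deriv f x); have := abs_nonneg (deriv (deriv f) x)
    have := le_abs_self Cf'; linarith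
  have hf1 : ∀ x, |deriv f x| ≤ |Cf'| + 1 := fun x => by
    have := hCf' x; have := abs_nonneg (f x); have := abs_nonneg (deriv (deriv f) x)
    have := le_abs_self Cf'; linarith
  have hf2 : ∀ x, |deriv (deriv f) x| ≤ |Cf'| + 1 := fun x => by
    have := hCf' x; have := abs_nonneg (f x); have := abs_nonneg (deriv f x)
    have := le_abs_self Cf'; linarith
  have hfd : Differentiable ℝ f ∧ ContDiff ℝ 1 (deriv f) := by
    have hf' : ContDiff ℝ ((1:WithTop ℕ∞) + 1) f := by exact_mod_cast hf
    have h := contDiff_succ_iff_deriv.mp hf'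
    exact ⟨h.1, h.2.2⟩
  obtain ⟨hfdiff, hf'1⟩ := hfd
  obtain ⟨hf'diff, hf''cont⟩ := contDiff_one_iff_deriv.mp hf'1
  have cf : Continuous f := hfdiff.continuous
  have cf' : Continuous (deriv f) := hf'1.continuous
  have hdf : ∀ x, HasDerivAt f (deriv f x) x := fun x => (hfdiff x).hasDerivAt
  have hdf' : ∀ x, HasDerivAt (deriv f) (deriv (deriv f) x) x := fun x => (hf'diff x).hasDerivAt
  intro t
  -- smoothness of slices
  have hsl : ∀ s : ℝ, ContDiff ℝ ((⊤ : ℕ∞) : WithTop ℕ∞) (u s) := fun s =>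
    (hu.of_le (by simp)).comp (contDiff_const.prodMk contDiff_id)
  obtain ⟨hvd, hv1⟩ := contDiff_infty_iff_deriv.mp (hsl t)
  obtain ⟨hv1d, hv2⟩ := contDiff_infty_iff_deriv.mp hv1
  obtain ⟨hv2d, hv3⟩ := contDiff_infty_iff_deriv.mp hv2
  have cv : Continuous (u t) := (hsl t).continuous
  have cv1 : Continuous (deriv (u t)) := hv1.continuous
  have cv2 : Continuous (deriv (deriv (u t))) := hv2.continuous
  have cv3 : Continuous (deriv (deriv (deriv (u t)))) := hv3.continuous
  have hd0 : ∀ x, HasDerivAt (u t) (deriv (u t) x) x := fun x => (hvd x).hasDerivAt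
  have hd1 : ∀ x, HasDerivAt (deriv (u t)) (deriv (deriv (u t)) x) x :=
    fun x => (hv1d x).hasDerivAt
  have hd2 : ∀ x, HasDerivAt (deriv (deriv (u t))) (deriv (deriv (deriv (u t))) x) x :=
    fun x => (hv2d x).hasDerivAt
  have hds : ∀ x : ℝ, Differentiable ℝ (fun r : ℝ => u r x) := fun x =>
    (hu.differentiable (by simp)).comp (differentiable_id.prodMk (differentiable_const x))
  -- decay constants
  have it2 : ∀ g : ℝ → ℝ, iteratedDeriv 2 g = deriv (deriv g) := fun g => by
    rw [iteratedDeriv_succ, iteratedDeriv_one]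
  have it3 : ∀ g : ℝ → ℝ, iteratedDeriv 3 g = deriv (deriv (deriv g)) := fun g => by
    rw [iteratedDeriv_succ, it2]
  obtain ⟨E0, hE0'⟩ := hdecay 2 0
  obtain ⟨E1, hE1'⟩ := hdecay 2 1
  obtain ⟨E2, hE2'⟩ := hdecay 2 2
  obtain ⟨E3, hE3'⟩ := hdecay 2 3
  obtain ⟨Et, hEt'⟩ := hdecayt 2
  have hD0 : ∀ s x : ℝ, |u s x| * (1 + |x|) ^ 2 ≤ |E0| + 1 := fun s x => by
    have h := hE0' s x; rw [iteratedDeriv_zero] at h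
    have := le_abs_self E0; linarith
  have hD1 : ∀ s x : ℝ, |deriv (u s) x| * (1 + |x|) ^ 2 ≤ |E1| + 1 := fun s x => by
    have h := hE1' s x; rw [iteratedDeriv_one] at h
    have := le_abs_self E1; linarith
  have hD2 : ∀ s x : ℝ, |deriv (deriv (u s)) x| * (1 + |x|) ^ 2 ≤ |E2| + 1 := fun s x => by
    have h := hE2' s x; rw [it2] at h
    have := le_abs_self E2; linarith
  have hD3 : ∀ s x : ℝ, |deriv (deriv (deriv (u s))) x| * (1 + |x|) ^ 2 ≤ |E3| + 1 :=
    fun s x => by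
    have h := hE3' s x; rw [it3] at h
    have := le_abs_self E3; linarith
  have hDt : ∀ s x : ℝ, |deriv (fun r : ℝ => u r x) s| * (1 + |x|) ^ 2 ≤ |Et| + 1 :=
    fun s x => by
    have h := hEt' s x; have := le_abs_self Et; linarith
  have b0 : ∀ x, |u t x| ≤ |E0| + 1 := (Lsup (hD0 t)).1
  have w0 : ∀ x, |u t x| * (1 + |x|) ≤ |E0| + 1 := (Lsup (hD0 t)).2
  have b1 : ∀ x, |deriv (u t) x| ≤ |E1| + 1 := (Lsup (hD1 t)).1
  have w1 : ∀ x, |deriv (u t) x| * (1 + |x|) ≤ |E1| + 1 := (Lsup (hD1 t)).2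
  have b2 : ∀ x, |deriv (deriv (u t)) x| ≤ |E2| + 1 := (Lsup (hD2 t)).1
  have b3 : ∀ x, |deriv (deriv (deriv (u t))) x| ≤ |E3| + 1 := (Lsup (hD3 t)).1
  -- PDE rewriting
  have hderiv3 : ∀ x, deriv (fun y : ℝ => deriv (deriv (u t)) y + (u t y) ^ 3) x
      = deriv (deriv (deriv (u t))) x + 3 * (u t x) ^ 2 * deriv (u t) x := by
    intro x
    have h := ((hd2 x).add ((hd0 x).pow 3)).deriv
    rw [show (fun y : ℝ => deriv (deriv (u t)) y + (u t y) ^ 3) = deriv (deriv (u t)) + u t ^ 3 from rfl, h]; push_cast; ring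
  have hut : ∀ x, deriv (fun s : ℝ => u s x) t
      = -(deriv (deriv (deriv (u t))) x + 3 * (u t x) ^ 2 * deriv (u t) x) := fun x => by
    have := hPDE t x; rw [hderiv3 x] at this; linarith
  -- differentiation under the integral
  have key : Integrable (fun x => 2 * u t x * deriv (fun r : ℝ => u r x) t * f x) ∧
      HasDerivAt (fun s : ℝ => ∫ x : ℝ, u s x ^ 2 * f x)
        (∫ x : ℝ, 2 * u t x * deriv (fun r : ℝ => u r x) t * f x) t := by
    apply hasDerivAt_integral_of_dominated_loc_of_deriv_le (s := Metric.ball t 1)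
      (F := fun s x => u s x ^ 2 * f x)
      (F' := fun s x => 2 * u s x * deriv (fun r : ℝ => u r x) s * f x)
      (bound := fun x : ℝ => (2 * (|E0| + 1) * (|Et| + 1) * (|Cf'| + 1)) * (1 + x ^ 2)⁻¹)
      (Metric.ball_mem_nhds t one_pos)
    · exact Eventually.of_forall fun s =>
        (((hsl s).continuous.pow 2).mul cf).aestronglyMeasurable
    · apply Ldecint _ ((cv.pow 2).mul cf) ((|E0| + 1) * (|E0| + 1) * (|Cf'| + 1))
      intro x
      rw [Pi.mul_apply, Pi.pow_apply, abs_mul, abs_pow]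
      calc |u t x| ^ 2 * |f x| * (1 + |x|) ^ 2
          = (|u t x| * (1 + |x|) ^ 2) * |u t x| * |f x| := by ring
        _ ≤ (|E0| + 1) * (|E0| + 1) * (|Cf'| + 1) := by
            gcongr
            · exact hD0 t x
            · exact b0 x
            · exact hf0 x
    · have he : (fun x : ℝ => 2 * u t x * deriv (fun r : ℝ => u r x) t * f x)
          = fun x => 2 * u t x *
              (-(deriv (deriv (deriv (u t))) x + 3 * (u t x) ^ 2 * deriv (u t) x)) * f x := by
        funext x; rw [hut x]
      rw [he]
      exact (((continuous_const.mul cv).mul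
        ((cv3.add ((continuous_const.mul (cv.pow 2)).mul cv1)).neg)).mul cf).aestronglyMeasurable
    · refine Eventually.of_forall fun x s _ => ?_
      rw [Real.norm_eq_abs, abs_mul, abs_mul, abs_mul]
      have hdinv : |deriv (fun r : ℝ => u r x) s| ≤ (|Et| + 1) * (1 + x ^ 2)⁻¹ :=
        Linv (hDt s x)
      calc |(2:ℝ)| * |u s x| * |deriv (fun r : ℝ => u r x) s| * |f x|
          ≤ 2 * (|E0| + 1) * ((|Et| + 1) * (1 + x ^ 2)⁻¹) * (|Cf'| + 1) := by
            rw [abs_two]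
            gcongr
            · exact (Lsup (hD0 s)).1 x
            · exact hf0 x
        _ = (2 * (|E0| + 1) * (|Et| + 1) * (|Cf'| + 1)) * (1 + x ^ 2)⁻¹ := by ring
    · exact integrable_inv_one_add_sq.const_mul _
    · refine Eventually.of_forall fun x s _ => ?_
      have h := (((hds x) s).hasDerivAt.pow 2).mul_const (f x)
      refine h.congr_deriv ?_
      push_cast; ring
  -- continuity of integrands
  have cP : Continuous (fun x : ℝ =>
      -(u t x * (deriv (deriv (deriv (u t))) x + 3 * u t x ^ 2 * deriv (u t) x) * f x)) :=
    ((cv.mul (cv3.add ((continuous_const.mul (cv.pow 2)).mul cv1))).mul cf).neg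
  have cA : Continuous (fun x : ℝ =>
      (-(3 / 2) * (deriv (u t) x) ^ 2 + 3 / 4 * (u t x) ^ 4) * deriv f x) :=
    ((continuous_const.mul (cv1.pow 2)).add (continuous_const.mul (cv.pow 4))).mul cf'
  have cB : Continuous (fun x : ℝ => deriv (u t) x * u t x * deriv (deriv f) x) :=
    (cv1.mul cv).mul hf''cont
  -- integrability
  have hPint : Integrable (fun x : ℝ =>
      -(u t x * (deriv (deriv (deriv (u t))) x + 3 * u t x ^ 2 * deriv (u t) x) * f x)) := by
    apply Ldecint _ cP ((|E0| + 1) * ((|E3| + 1) + 3 * (|E0| + 1) ^ 2 * (|E1| + 1)) * (|Cf'| + 1))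
    intro x
    rw [abs_neg, abs_mul, abs_mul]
    have htri : |deriv (deriv (deriv (u t))) x + 3 * u t x ^ 2 * deriv (u t) x| * (1 + |x|) ^ 2
        ≤ (|E3| + 1) + 3 * (|E0| + 1) ^ 2 * (|E1| + 1) := by
      have h1 := abs_add_le (deriv (deriv (deriv (u t))) x) (3 * u t x ^ 2 * deriv (u t) x)
      have e1 : |3 * u t x ^ 2 * deriv (u t) x| = 3 * |u t x| ^ 2 * |deriv (u t) x| := by
        rw [abs_mul, abs_mul, abs_pow]; norm_num
      calc |deriv (deriv (deriv (u t))) x + 3 * u t x ^ 2 * deriv (u t) x| * (1 + |x|) ^ 2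
          ≤ (|deriv (deriv (deriv (u t))) x| + 3 * |u t x| ^ 2 * |deriv (u t) x|) * (1 + |x|) ^ 2 := by
            rw [e1] at h1
            exact mul_le_mul_of_nonneg_right h1 (by positivity)
        _ = |deriv (deriv (deriv (u t))) x| * (1 + |x|) ^ 2
              + 3 * (|u t x| ^ 2 * (|deriv (u t) x| * (1 + |x|) ^ 2)) := by ring
        _ ≤ (|E3| + 1) + 3 * ((|E0| + 1) ^ 2 * (|E1| + 1)) := by
            gcongr
            · exact hD3 t x
            · exact b0 x
            · exact hD1 t x
        _ = (|E3| + 1) + 3 * (|E0| + 1) ^ 2 * (|E1| + 1) := by ring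
    calc |u t x| * |deriv (deriv (deriv (u t))) x + 3 * u t x ^ 2 * deriv (u t) x| * |f x|
          * (1 + |x|) ^ 2
        = |u t x| * (|deriv (deriv (deriv (u t))) x + 3 * u t x ^ 2 * deriv (u t) x|
            * (1 + |x|) ^ 2) * |f x| := by ring
      _ ≤ (|E0| + 1) * ((|E3| + 1) + 3 * (|E0| + 1) ^ 2 * (|E1| + 1)) * (|Cf'| + 1) := by
          gcongr <;> first | exact b0 x | exact htri | exact hf0 x
  have hAint : Integrable (fun x : ℝ =>
      (-(3 / 2) * (deriv (u t) x) ^ 2 + 3 / 4 * (u t x) ^ 4) * deriv f x) := by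
    apply Ldecint _ cA ((3 / 2 * (|E1| + 1) ^ 2 + 3 / 4 * (|E0| + 1) ^ 4) * (|Cf'| + 1))
    intro x
    rw [abs_mul]
    have htri : |(-(3 / 2) * (deriv (u t) x) ^ 2 + 3 / 4 * (u t x) ^ 4)| * (1 + |x|) ^ 2
        ≤ 3 / 2 * (|E1| + 1) ^ 2 + 3 / 4 * (|E0| + 1) ^ 4 := by
      have h1 := abs_add_le (-(3 / 2) * (deriv (u t) x) ^ 2) (3 / 4 * (u t x) ^ 4)
      have e1 : |(-(3 / 2) : ℝ) * (deriv (u t) x) ^ 2| = 3 / 2 * |deriv (u t) x| ^ 2 := by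
        rw [abs_mul, abs_pow]; norm_num
      have e2 : |(3 / 4 : ℝ) * (u t x) ^ 4| = 3 / 4 * |u t x| ^ 4 := by
        rw [abs_mul, abs_pow]; norm_num
      calc |(-(3 / 2) * (deriv (u t) x) ^ 2 + 3 / 4 * (u t x) ^ 4)| * (1 + |x|) ^ 2
          ≤ (3 / 2 * |deriv (u t) x| ^ 2 + 3 / 4 * |u t x| ^ 4) * (1 + |x|) ^ 2 := by
            rw [e1, e2] at h1
            exact mul_le_mul_of_nonneg_right h1 (by positivity)
        _ = 3 / 2 * (|deriv (u t) x| * (|deriv (u t) x| * (1 + |x|) ^ 2))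
              + 3 / 4 * (|u t x| ^ 3 * (|u t x| * (1 + |x|) ^ 2)) := by ring
        _ ≤ 3 / 2 * ((|E1| + 1) * (|E1| + 1)) + 3 / 4 * ((|E0| + 1) ^ 3 * (|E0| + 1)) := by
            gcongr
            · exact b1 x
            · exact hD1 t x
            · exact b0 x
            · exact hD0 t x
        _ = 3 / 2 * (|E1| + 1) ^ 2 + 3 / 4 * (|E0| + 1) ^ 4 := by ring
    calc |(-(3 / 2) * (deriv (u t) x) ^ 2 + 3 / 4 * (u t x) ^ 4)| * |deriv f x| * (1 + |x|) ^ 2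
        = (|(-(3 / 2) * (deriv (u t) x) ^ 2 + 3 / 4 * (u t x) ^ 4)| * (1 + |x|) ^ 2)
            * |deriv f x| := by ring
      _ ≤ (3 / 2 * (|E1| + 1) ^ 2 + 3 / 4 * (|E0| + 1) ^ 4) * (|Cf'| + 1) := by
          gcongr <;> first | exact htri | exact hf1 x
  have hBint : Integrable (fun x : ℝ => deriv (u t) x * u t x * deriv (deriv f) x) := by
    apply Ldecint _ cB ((|E1| + 1) * (|E0| + 1) * (|Cf'| + 1))
    intro x
    rw [abs_mul, abs_mul]
    calc |deriv (u t) x| * |u t x| * |deriv (deriv f) x| * (1 + |x|) ^ 2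
        = (|deriv (u t) x| * (1 + |x|) ^ 2) * |u t x| * |deriv (deriv f) x| := by ring
      _ ≤ (|E1| + 1) * (|E0| + 1) * (|Cf'| + 1) := by
          gcongr
          · exact hD1 t x
          · exact b0 x
          · exact hf2 x
  -- the antiderivative G
  have hG : ∀ x, HasDerivAt (fun y : ℝ =>
        -(u t y * deriv (deriv (u t)) y * f y) + 1 / 2 * (deriv (u t) y) ^ 2 * f y
          - 3 / 4 * (u t y) ^ 4 * f y + u t y * deriv (u t) y * deriv f y)
      (-(u t x * (deriv (deriv (deriv (u t))) x + 3 * u t x ^ 2 * deriv (u t) x) * f x)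
        - (-(3 / 2) * (deriv (u t) x) ^ 2 + 3 / 4 * (u t x) ^ 4) * deriv f x
        + deriv (u t) x * u t x * deriv (deriv f) x) x := by
    intro x
    have h1 := (((hd0 x).mul (hd2 x)).mul (hdf x)).neg
    have h2 := (((hd1 x).pow 2).const_mul ((1 : ℝ) / 2)).mul (hdf x)
    have h3 := (((hd0 x).pow 4).const_mul ((3 : ℝ) / 4)).mul (hdf x)
    have h4 := ((hd0 x).mul (hd1 x)).mul (hdf' x)
    have h := ((h1.add h2).sub h3).add h4
    refine h.congr_deriv ?_
    simp only [Pi.mul_apply, Pi.pow_apply]; push_cast; ring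
  have hIint : Integrable (fun x : ℝ =>
      -(u t x * (deriv (deriv (deriv (u t))) x + 3 * u t x ^ 2 * deriv (u t) x) * f x)
        - (-(3 / 2) * (deriv (u t) x) ^ 2 + 3 / 4 * (u t x) ^ 4) * deriv f x
        + deriv (u t) x * u t x * deriv (deriv f) x) := (hPint.sub hAint).add hBint
  -- decay of G
  have hGdec : ∀ x : ℝ, |(-(u t x * deriv (deriv (u t)) x * f x) + 1 / 2 * (deriv (u t) x) ^ 2 * f x
        - 3 / 4 * (u t x) ^ 4 * f x + u t x * deriv (u t) x * deriv f x)| * (1 + |x|)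
      ≤ (|E0| + 1) * (|E2| + 1) * (|Cf'| + 1) + 1 / 2 * ((|E1| + 1) * (|E1| + 1) * (|Cf'| + 1))
        + 3 / 4 * ((|E0| + 1) * (|E0| + 1) ^ 3 * (|Cf'| + 1))
        + (|E0| + 1) * (|E1| + 1) * (|Cf'| + 1) := by
    intro x
    have habs : |(-(u t x * deriv (deriv (u t)) x * f x) + 1 / 2 * (deriv (u t) x) ^ 2 * f x
          - 3 / 4 * (u t x) ^ 4 * f x + u t x * deriv (u t) x * deriv f x)|
        ≤ |u t x| * |deriv (deriv (u t)) x| * |f x| + 1 / 2 * |deriv (u t) x| ^ 2 * |f x|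
          + 3 / 4 * |u t x| ^ 4 * |f x| + |u t x| * |deriv (u t) x| * |deriv f x| := by
      refine (abs4 _ _ _ _).trans_eq ?_
      rw [abs_neg, abs_mul, abs_mul, abs_mul, abs_mul, abs_mul, abs_mul, abs_mul, abs_mul]
      rw [abs_pow, abs_pow]
      norm_num [abs_div]
    calc |(-(u t x * deriv (deriv (u t)) x * f x) + 1 / 2 * (deriv (u t) x) ^ 2 * f x
          - 3 / 4 * (u t x) ^ 4 * f x + u t x * deriv (u t) x * deriv f x)| * (1 + |x|)
        ≤ (|u t x| * |deriv (deriv (u t)) x| * |f x| + 1 / 2 * |deriv (u t) x| ^ 2 * |f x|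
            + 3 / 4 * |u t x| ^ 4 * |f x| + |u t x| * |deriv (u t) x| * |deriv f x|)
            * (1 + |x|) := mul_le_mul_of_nonneg_right habs (by positivity)
      _ = (|u t x| * (1 + |x|)) * |deriv (deriv (u t)) x| * |f x|
            + 1 / 2 * ((|deriv (u t) x| * (1 + |x|)) * |deriv (u t) x| * |f x|)
            + 3 / 4 * ((|u t x| * (1 + |x|)) * |u t x| ^ 3 * |f x|)
            + (|u t x| * (1 + |x|)) * |deriv (u t) x| * |deriv f x| := by ring
      _ ≤ (|E0| + 1) * (|E2| + 1) * (|Cf'| + 1)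
            + 1 / 2 * ((|E1| + 1) * (|E1| + 1) * (|Cf'| + 1))
            + 3 / 4 * ((|E0| + 1) * (|E0| + 1) ^ 3 * (|Cf'| + 1))
            + (|E0| + 1) * (|E1| + 1) * (|Cf'| + 1) := by
          gcongr <;> first
            | exact w0 x | exact w1 x | exact b0 x | exact b1 x | exact b2 x
            | exact hf0 x | exact hf1 x
  have hGtb := Ldec0 _ _ hGdec
  have hzero := L1 _ _ hG hIint hGtb.1 hGtb.2
  have hsplit : (∫ x : ℝ,
        (-(u t x * (deriv (deriv (deriv (u t))) x + 3 * u t x ^ 2 * deriv (u t) x) * f x)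
          - (-(3 / 2) * (deriv (u t) x) ^ 2 + 3 / 4 * (u t x) ^ 4) * deriv f x
          + deriv (u t) x * u t x * deriv (deriv f) x))
      = (∫ x : ℝ, -(u t x * (deriv (deriv (deriv (u t))) x + 3 * u t x ^ 2 * deriv (u t) x) * f x))
        - (∫ x : ℝ, (-(3 / 2) * (deriv (u t) x) ^ 2 + 3 / 4 * (u t x) ^ 4) * deriv f x)
        + ∫ x : ℝ, deriv (u t) x * u t x * deriv (deriv f) x := by
    have hPA : Integrable (fun x : ℝ =>
        -(u t x * (deriv (deriv (deriv (u t))) x + 3 * u t x ^ 2 * deriv (u t) x) * f x)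
          - (-(3 / 2) * (deriv (u t) x) ^ 2 + 3 / 4 * (u t x) ^ 4) * deriv f x) :=
      hPint.sub hAint
    rw [integral_add hPA hBint, integral_sub hPint hAint]
  rw [hsplit] at hzero
  -- final assembly
  have e1 : (fun x : ℝ => 2 * u t x * deriv (fun r : ℝ => u r x) t * f x)
      = fun x : ℝ => 2 *
          (-(u t x * (deriv (deriv (deriv (u t))) x + 3 * u t x ^ 2 * deriv (u t) x) * f x)) := by
    funext x; rw [hut x]; ring
  have H2 := key.2.const_mul ((1 : ℝ) / 2)
  have efin : (1 : ℝ) / 2 * (∫ x : ℝ, 2 * u t x * deriv (fun r : ℝ => u r x) t * f x)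
      = (∫ x : ℝ, (-(3 / 2) * (deriv (u t) x) ^ 2 + 3 / 4 * (u t x) ^ 4) * deriv f x)
        - ∫ x : ℝ, deriv (u t) x * u t x * deriv (deriv f) x := by
    rw [e1, integral_const_mul]
    linarith [hzero]
  rw [← efin]
  exact H2
end

section
/- Let u : ℝ × ℝ → ℝ be a smooth, rapidly decaying solution of u_t + (u_xx + u^3)_x = 0 and let f : ℝ → ℝ be a C^2 function with bounded derivatives, independent of time. Then d/dt ∫_ℝ [(1/2)u_x^2 − (1/4)u^4] f dx = ∫_ℝ [−(1/2)(u_xx + u^3)^2 − u_xx^2 + 3u_x^2 u^2] f' dx − ∫_ℝ u_xx u_x f'' dx. -/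
open MeasureTheory Filter Topology ContDiff

namespace LEE


variable {g : ℝ × ℝ → ℝ}

lemma hasDerivAt_snd (hg : ContDiff ℝ (⊤ : ℕ∞) g) (s x : ℝ) :
    HasDerivAt (fun y => g (s, y)) (fderiv ℝ g (s, x) (0, 1)) x :=
  (hg.differentiable (by simp) (s, x)).hasFDerivAt.comp_hasDerivAt x
    ((hasDerivAt_const x s).prodMk (hasDerivAt_id x))

lemma hasDerivAt_fst (hg : ContDiff ℝ (⊤ : ℕ∞) g) (s x : ℝ) :
    HasDerivAt (fun r => g (r, x)) (fderiv ℝ g (s, x) (1, 0)) s :=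
  (hg.differentiable (by simp) (s, x)).hasFDerivAt.comp_hasDerivAt s
    ((hasDerivAt_id s).prodMk (hasDerivAt_const s x))

lemma contDiff_pd (hg : ContDiff ℝ (⊤ : ℕ∞) g) (v : ℝ × ℝ) :
    ContDiff ℝ (⊤ : ℕ∞) (fun p => fderiv ℝ g p v) :=
  (hg.fderiv_right (by simp)).clm_apply contDiff_const

lemma pd_comm (hg : ContDiff ℝ (⊤ : ℕ∞) g) (p : ℝ × ℝ) (v w : ℝ × ℝ) :
    fderiv ℝ (fun q => fderiv ℝ g q v) p w = fderiv ℝ (fun q => fderiv ℝ g q w) p v := by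
  have hd : ∀ q, HasFDerivAt g (fderiv ℝ g q) q := fun q =>
    (hg.differentiable (by simp) q).hasFDerivAt
  have h2 : HasFDerivAt (fderiv ℝ g) (fderiv ℝ (fderiv ℝ g) p) p :=
    (((hg.fderiv_right (m := (⊤ : ℕ∞)) (by simp)).differentiable (by simp)) p).hasFDerivAt
  have hsymm := second_derivative_symmetric hd h2 v w
  have e1 : ∀ a : ℝ × ℝ, fderiv ℝ (fun q => fderiv ℝ g q a) p
      = (fderiv ℝ (fderiv ℝ g) p).flip a := by
    intro a
    have := fderiv_clm_apply (c := fderiv ℝ g) (u := fun _ => a)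
      (((hg.fderiv_right (m := (⊤ : ℕ∞)) (by simp)).differentiable (by simp)) p)
      (differentiableAt_const a)
    simpa using this
  rw [e1, e1]
  simpa using hsymm.symm



/-- bounded and quadratically decaying continuous function -/
def Dec (g : ℝ → ℝ) : Prop :=
  Continuous g ∧ ∃ C : ℝ, ∀ x, |g x| ≤ C ∧ |g x| ≤ C * (1 + x ^ 2)⁻¹

lemma Dec.integrable {g : ℝ → ℝ} (h : Dec g) : Integrable g := by
  obtain ⟨hc, C, hC⟩ := h
  exact (integrable_inv_one_add_sq.const_mul C).mono' hc.aestronglyMeasurable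
    (Filter.Eventually.of_forall fun x => by
      simpa [Real.norm_eq_abs] using (hC x).2)

lemma Dec.neg {g : ℝ → ℝ} (h : Dec g) : Dec fun x => -g x := by
  obtain ⟨hc, C, hC⟩ := h
  exact ⟨hc.neg, C, fun x => by simpa using hC x⟩

lemma Dec.add {g h : ℝ → ℝ} (hg : Dec g) (hh : Dec h) : Dec fun x => g x + h x := by
  obtain ⟨hcg, C, hC⟩ := hg
  obtain ⟨hch, D, hD⟩ := hh
  refine ⟨hcg.add hch, C + D, fun x => ?_⟩
  constructor
  · exact (abs_add_le _ _).trans (add_le_add (hC x).1 (hD x).1)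
  · refine (abs_add_le _ _).trans ?_
    rw [add_mul]
    exact add_le_add (hC x).2 (hD x).2

lemma Dec.mulB {g h : ℝ → ℝ} (hg : Dec g) (hch : Continuous h) {D : ℝ}
    (hb : ∀ x, |h x| ≤ D) : Dec fun x => g x * h x := by
  obtain ⟨hcg, C, hC⟩ := hg
  have hC0 : 0 ≤ C := le_trans (abs_nonneg _) (hC 0).1
  have hD0 : 0 ≤ D := le_trans (abs_nonneg _) (hb 0)
  refine ⟨hcg.mul hch, C * D, fun x => ?_⟩
  have hE : (0:ℝ) < (1 + x ^ 2)⁻¹ := by positivity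
  constructor
  · rw [abs_mul]
    exact mul_le_mul (hC x).1 (hb x) (abs_nonneg _) hC0
  · rw [abs_mul]
    calc |g x| * |h x| ≤ C * (1 + x ^ 2)⁻¹ * D :=
          mul_le_mul (hC x).2 (hb x) (abs_nonneg _) (by positivity)
      _ = C * D * (1 + x ^ 2)⁻¹ := by ring

lemma Dec.mul {g h : ℝ → ℝ} (hg : Dec g) (hh : Dec h) : Dec fun x => g x * h x := by
  obtain ⟨hch, D, hD⟩ := hh
  exact hg.mulB hch fun x => (hD x).1

lemma Dec.const_mul {g : ℝ → ℝ} (hg : Dec g) (c : ℝ) : Dec fun x => c * g x := by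
  obtain ⟨hcg, C, hC⟩ := hg
  have hC0 : 0 ≤ C := le_trans (abs_nonneg _) (hC 0).1
  refine ⟨continuous_const.mul hcg, |c| * C, fun x => ?_⟩
  constructor
  · rw [abs_mul]
    exact mul_le_mul_of_nonneg_left (hC x).1 (abs_nonneg c)
  · rw [abs_mul, mul_assoc]
    exact mul_le_mul_of_nonneg_left (hC x).2 (abs_nonneg c)

/-- extract Dec from the decay hypothesis format -/
lemma dec_of_decay {g : ℝ → ℝ} (hc : Continuous g) {C₀ C₂ : ℝ}
    (h0 : ∀ x, |g x| * (1 + |x|) ^ 0 ≤ C₀) (h2 : ∀ x, |g x| * (1 + |x|) ^ 2 ≤ C₂) :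
    Dec g := by
  refine ⟨hc, max C₀ C₂, fun x => ?_⟩
  constructor
  · simpa using (h0 x).trans (le_max_left _ _)
  · have hx : (1:ℝ) + x ^ 2 ≤ (1 + |x|) ^ 2 := by nlinarith [abs_nonneg x, sq_abs x]
    have h1 : (0:ℝ) < 1 + x ^ 2 := by positivity
    have : |g x| * (1 + x ^ 2) ≤ max C₀ C₂ := by
      refine le_trans ?_ ((h2 x).trans (le_max_right _ _))
      exact mul_le_mul_of_nonneg_left hx (abs_nonneg _)
    calc |g x| = |g x| * (1 + x ^ 2) * (1 + x ^ 2)⁻¹ := by field_simp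
      _ ≤ max C₀ C₂ * (1 + x ^ 2)⁻¹ :=
        mul_le_mul_of_nonneg_right this (by positivity)


lemma Dec.bMul {g h : ℝ → ℝ} (hg : Dec g) (hch : Continuous h) {D : ℝ}
    (hb : ∀ x, |h x| ≤ D) : Dec fun x => h x * g x := by
  have e : (fun x => h x * g x) = fun x => g x * h x := funext fun x => mul_comm _ _
  rw [e]; exact hg.mulB hch hb

lemma Dec.sub {g h : ℝ → ℝ} (hg : Dec g) (hh : Dec h) : Dec fun x => g x - h x := by
  have e : (fun x => g x - h x) = fun x => g x + -(h x) := funext fun x => sub_eq_add_neg _ _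
  rw [e]; exact hg.add hh.neg

lemma Dec.pow {g : ℝ → ℝ} (hg : Dec g) (n : ℕ) : Dec fun x => g x ^ (n + 1) := by
  induction n with
  | zero => simpa using hg
  | succ n ih => simp only [pow_succ]; exact ih.mul hg

lemma iter2 (v : ℝ → ℝ) : iteratedDeriv 2 v = deriv (deriv v) := by
  rw [show (2:ℕ) = 1 + 1 from rfl, iteratedDeriv_succ, iteratedDeriv_one]

lemma iter4 (v : ℝ → ℝ) : iteratedDeriv 4 v = deriv (deriv (deriv (deriv v))) := by
  rw [show (4:ℕ) = 3 + 1 from rfl, iteratedDeriv_succ, show (3:ℕ) = 2 + 1 from rfl,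
    iteratedDeriv_succ, iter2]

lemma decay2 {C a x : ℝ} (h : |a| * (1 + |x|) ^ 2 ≤ C) : |a| ≤ C * (1 + x ^ 2)⁻¹ := by
  have h1 : (0:ℝ) < 1 + x ^ 2 := by positivity
  have hx : 1 + x ^ 2 ≤ (1 + |x|) ^ 2 := by nlinarith [abs_nonneg x, sq_abs x]
  have h2 : |a| * (1 + x ^ 2) ≤ C :=
    le_trans (mul_le_mul_of_nonneg_left hx (abs_nonneg a)) h
  calc |a| = |a| * (1 + x ^ 2) * (1 + x ^ 2)⁻¹ := by field_simp
    _ ≤ C * (1 + x ^ 2)⁻¹ := mul_le_mul_of_nonneg_right h2 (by positivity)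

lemma wderiv (v : ℝ → ℝ) (hv : ContDiff ℝ ∞ v) :
    deriv (fun y => deriv (deriv v) y + v y ^ 3)
       = (fun x => deriv (deriv (deriv v)) x + 3 * v x ^ 2 * deriv v x) ∧
    deriv (deriv (fun y => deriv (deriv v) y + v y ^ 3))
       = fun x => deriv (deriv (deriv (deriv v))) x
           + (6 * v x * deriv v x ^ 2 + 3 * v x ^ 2 * deriv (deriv v) x) := by
  have hv1 : ContDiff ℝ ∞ (deriv v) := (contDiff_infty_iff_deriv.mp hv).2
  have hv2 : ContDiff ℝ ∞ (deriv (deriv v)) := (contDiff_infty_iff_deriv.mp hv1).2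
  have hv3 : ContDiff ℝ ∞ (deriv (deriv (deriv v))) := (contDiff_infty_iff_deriv.mp hv2).2
  have hdv : ∀ x, HasDerivAt v (deriv v x) x := fun x =>
    (hv.differentiable (by norm_num) x).hasDerivAt
  have hdv1 : ∀ x, HasDerivAt (deriv v) (deriv (deriv v) x) x := fun x =>
    (hv1.differentiable (by norm_num) x).hasDerivAt
  have hdv2 : ∀ x, HasDerivAt (deriv (deriv v)) (deriv (deriv (deriv v)) x) x := fun x =>
    (hv2.differentiable (by norm_num) x).hasDerivAt
  have hdv3 : ∀ x, HasDerivAt (deriv (deriv (deriv v))) (deriv (deriv (deriv (deriv v))) x) x :=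
    fun x => (hv3.differentiable (by norm_num) x).hasDerivAt
  have hw' : ∀ x, HasDerivAt (fun y => deriv (deriv v) y + v y ^ 3)
      (deriv (deriv (deriv v)) x + 3 * v x ^ 2 * deriv v x) x := by
    intro x
    have h := (hdv2 x).fun_add ((hdv x).fun_pow 3)
    exact h.congr_deriv (by push_cast; ring)
  have e1 : deriv (fun y => deriv (deriv v) y + v y ^ 3)
      = fun x => deriv (deriv (deriv v)) x + 3 * v x ^ 2 * deriv v x :=
    funext fun x => (hw' x).deriv
  refine ⟨e1, ?_⟩
  rw [e1]
  have hw'' : ∀ x, HasDerivAt (fun y => deriv (deriv (deriv v)) y + 3 * v y ^ 2 * deriv v y)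
      (deriv (deriv (deriv (deriv v))) x
        + (6 * v x * deriv v x ^ 2 + 3 * v x ^ 2 * deriv (deriv v) x)) x := by
    intro x
    have h := (hdv3 x).fun_add ((HasDerivAt.const_mul (3:ℝ) ((hdv x).fun_pow 2)).fun_mul (hdv1 x))
    exact h.congr_deriv (by push_cast; ring)
  exact funext fun x => (hw'' x).deriv

theorem spatial (v f : ℝ → ℝ) (hv : ContDiff ℝ (⊤ : ℕ∞) v)
    (hDec : ∀ k : ℕ, Dec (iteratedDeriv k v))
    (hf : ContDiff ℝ 2 f) {Cf : ℝ}
    (hfb : ∀ x, |f x| + |deriv f x| + |deriv (deriv f) x| ≤ Cf) :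
    ∫ x : ℝ, (-(deriv v x) * deriv (deriv (fun y => deriv (deriv v) y + v y ^ 3)) x
        + (v x) ^ 3 * deriv (fun y => deriv (deriv v) y + v y ^ 3) x) * f x
    = (∫ x : ℝ, (-(1 / 2) * (deriv (deriv v) x + v x ^ 3) ^ 2
          - (deriv (deriv v) x) ^ 2 + 3 * (deriv v x) ^ 2 * (v x) ^ 2) * deriv f x)
      - ∫ x : ℝ, deriv (deriv v) x * deriv v x * deriv (deriv f) x := by
  -- smoothness of successive derivatives
  have hv0 : ContDiff ℝ ∞ v := hv.of_le (by simp)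
  have hv1 : ContDiff ℝ ∞ (deriv v) := (contDiff_infty_iff_deriv.mp hv0).2
  have hv2 : ContDiff ℝ ∞ (deriv (deriv v)) := (contDiff_infty_iff_deriv.mp hv1).2
  have hv3 : ContDiff ℝ ∞ (deriv (deriv (deriv v))) := (contDiff_infty_iff_deriv.mp hv2).2
  set v1 := deriv v with hv1e
  set v2 := deriv v1 with hv2e
  set v3 := deriv v2 with hv3e
  set v4 := deriv v3 with hv4e
  -- pointwise derivatives
  have hdv : ∀ x, HasDerivAt v (v1 x) x := fun x => (hv0.differentiable (by norm_num) x).hasDerivAt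
  have hdv1 : ∀ x, HasDerivAt v1 (v2 x) x := fun x => (hv1.differentiable (by norm_num) x).hasDerivAt
  have hdv2 : ∀ x, HasDerivAt v2 (v3 x) x := fun x => (hv2.differentiable (by norm_num) x).hasDerivAt
  have hdv3 : ∀ x, HasDerivAt v3 (v4 x) x := fun x => (hv3.differentiable (by norm_num) x).hasDerivAt
  -- f facts
  have hfd : Differentiable ℝ f := hf.differentiable (by simp)
  have hf' : ContDiff ℝ 1 (deriv f) := by
    have h := (contDiff_succ_iff_deriv (n := 1)).mp hf
    exact h.2.2
  have hfd1 : Differentiable ℝ (deriv f) := hf'.differentiable (by simp)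
  have hcf2 : Continuous (deriv (deriv f)) := by
    have h := (contDiff_succ_iff_deriv (n := 0)).mp hf'
    exact h.2.2.continuous
  have hdf : ∀ x, HasDerivAt f (deriv f x) x := fun x => (hfd x).hasDerivAt
  have hdf1 : ∀ x, HasDerivAt (deriv f) (deriv (deriv f) x) x := fun x => (hfd1 x).hasDerivAt
  have hb0 : ∀ x, |f x| ≤ Cf := fun x => by
    have := hfb x; have := abs_nonneg (deriv f x); have := abs_nonneg (deriv (deriv f) x); linarith
  have hb1 : ∀ x, |deriv f x| ≤ Cf := fun x => by
    have := hfb x; have := abs_nonneg (f x); have := abs_nonneg (deriv (deriv f) x); linarith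
  have hb2 : ∀ x, |deriv (deriv f) x| ≤ Cf := fun x => by
    have := hfb x; have := abs_nonneg (f x); have := abs_nonneg (deriv f x); linarith
  -- Dec atoms
  have dv0 : Dec v := by have := hDec 0; rwa [iteratedDeriv_zero] at this
  have dv1 : Dec v1 := by have := hDec 1; rwa [iteratedDeriv_one] at this
  have dv2 : Dec v2 := by
    have := hDec 2; rwa [show (2:ℕ) = 1 + 1 from rfl, iteratedDeriv_succ, iteratedDeriv_one] at this
  have dv3 : Dec v3 := by
    have := hDec 3
    rwa [show (3:ℕ) = 2 + 1 from rfl, iteratedDeriv_succ, show (2:ℕ) = 1 + 1 from rfl,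
      iteratedDeriv_succ, iteratedDeriv_one] at this
  have dv4 : Dec v4 := by
    have := hDec 4
    rwa [show (4:ℕ) = 3 + 1 from rfl, iteratedDeriv_succ, show (3:ℕ) = 2 + 1 from rfl,
      iteratedDeriv_succ, show (2:ℕ) = 1 + 1 from rfl, iteratedDeriv_succ,
      iteratedDeriv_one] at this
  set F1 := deriv f with hF1e
  set F2 := deriv (deriv f) with hF2e
  have hcf : Continuous f := hf.continuous
  have hcf1 : Continuous F1 := hf'.continuous
  -- w and its derivatives
  have hw' : ∀ x, HasDerivAt (fun y => v2 y + v y ^ 3) (v3 x + 3 * v x ^ 2 * v1 x) x := by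
    intro x
    have h := (hdv2 x).fun_add ((hdv x).fun_pow 3)
    exact h.congr_deriv (by push_cast; ring)
  have ew1 : deriv (fun y => v2 y + v y ^ 3) = fun x => v3 x + 3 * v x ^ 2 * v1 x :=
    funext fun x => (hw' x).deriv
  have hw'' : ∀ x, HasDerivAt (fun y => v3 y + 3 * v y ^ 2 * v1 y)
      (v4 x + (6 * v x * v1 x ^ 2 + 3 * v x ^ 2 * v2 x)) x := by
    intro x
    have h := (hdv3 x).fun_add ((HasDerivAt.const_mul (3:ℝ) ((hdv x).fun_pow 2)).fun_mul (hdv1 x))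
    exact h.congr_deriv (by push_cast; ring)
  have ew2 : deriv (fun x => v3 x + 3 * v x ^ 2 * v1 x)
      = fun x => v4 x + (6 * v x * v1 x ^ 2 + 3 * v x ^ 2 * v2 x) :=
    funext fun x => (hw'' x).deriv
  simp only [ew1, ew2]
  -- Dec facts
  have dw : Dec (fun x => v2 x + v x ^ 3) := dv2.add (dv0.pow 2)
  have dw' : Dec (fun x => v3 x + 3 * v x ^ 2 * v1 x) :=
    dv3.add (((dv0.pow 1).const_mul 3).mul dv1)
  have dw'' : Dec (fun x => v4 x + (6 * v x * v1 x ^ 2 + 3 * v x ^ 2 * v2 x)) :=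
    dv4.add (((dv0.const_mul 6).mul (dv1.pow 1)).add (((dv0.pow 1).const_mul 3).mul dv2))
  -- integration by parts #1 : u = v1 * f against w'
  have hu1 : ∀ x, HasDerivAt (fun y => v1 y * f y) (v2 x * f x + v1 x * F1 x) x :=
    fun x => (hdv1 x).mul (hdf x)
  have i1a : Integrable fun x => (v1 x * f x) * (v4 x + (6 * v x * v1 x ^ 2 + 3 * v x ^ 2 * v2 x)) :=
    ((dv1.mulB hcf hb0).mul dw'').integrable
  have i1b : Integrable fun x => (v2 x * f x + v1 x * F1 x) * (v3 x + 3 * v x ^ 2 * v1 x) :=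
    (((dv2.mulB hcf hb0).add (dv1.mulB hcf1 hb1)).mul dw').integrable
  have i1c : Integrable fun x => (v1 x * f x) * (v3 x + 3 * v x ^ 2 * v1 x) :=
    ((dv1.mulB hcf hb0).mul dw').integrable
  have IBP1 : ∫ x : ℝ, (v1 x * f x) * (v4 x + (6 * v x * v1 x ^ 2 + 3 * v x ^ 2 * v2 x))
      = -∫ x : ℝ, (v2 x * f x + v1 x * F1 x) * (v3 x + 3 * v x ^ 2 * v1 x) :=
    integral_mul_deriv_eq_deriv_mul_of_integrable (fun x _ => hu1 x) (fun x _ => hw'' x) i1a i1b i1c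
  -- integration by parts #2 : f against (1/2) w ^ 2
  have hA : ∀ x, HasDerivAt (fun y => 1 / 2 * (v2 y + v y ^ 3) ^ 2)
      ((v2 x + v x ^ 3) * (v3 x + 3 * v x ^ 2 * v1 x)) x := by
    intro x
    have h := HasDerivAt.const_mul ((1:ℝ)/2) (((hdv2 x).fun_add ((hdv x).fun_pow 3)).fun_pow 2)
    exact h.congr_deriv (by push_cast; ring)
  have i2a : Integrable fun x => f x * ((v2 x + v x ^ 3) * (v3 x + 3 * v x ^ 2 * v1 x)) :=
    ((dw.mul dw').bMul hcf hb0).integrable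
  have i2b : Integrable fun x => F1 x * (1 / 2 * (v2 x + v x ^ 3) ^ 2) :=
    (((dw.pow 1).const_mul (1/2)).bMul hcf1 hb1).integrable
  have i2c : Integrable fun x => f x * (1 / 2 * (v2 x + v x ^ 3) ^ 2) :=
    (((dw.pow 1).const_mul (1/2)).bMul hcf hb0).integrable
  have IBP2 : ∫ x : ℝ, f x * ((v2 x + v x ^ 3) * (v3 x + 3 * v x ^ 2 * v1 x))
      = -∫ x : ℝ, F1 x * (1 / 2 * (v2 x + v x ^ 3) ^ 2) :=
    integral_mul_deriv_eq_deriv_mul_of_integrable (fun x _ => hdf x) (fun x _ => hA x) i2a i2b i2c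
  -- integration by parts #3 : v1 * F1 against v2
  have hu3 : ∀ x, HasDerivAt (fun y => v1 y * F1 y) (v2 x * F1 x + v1 x * F2 x) x :=
    fun x => (hdv1 x).mul (hdf1 x)
  have i3a : Integrable fun x => (v1 x * F1 x) * v3 x :=
    ((dv1.mulB hcf1 hb1).mul dv3).integrable
  have i3b : Integrable fun x => (v2 x * F1 x + v1 x * F2 x) * v2 x :=
    (((dv2.mulB hcf1 hb1).add (dv1.mulB hcf2 hb2)).mul dv2).integrable
  have i3c : Integrable fun x => (v1 x * F1 x) * v2 x :=
    ((dv1.mulB hcf1 hb1).mul dv2).integrable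
  have IBP3 : ∫ x : ℝ, (v1 x * F1 x) * v3 x
      = -∫ x : ℝ, (v2 x * F1 x + v1 x * F2 x) * v2 x :=
    integral_mul_deriv_eq_deriv_mul_of_integrable (fun x _ => hu3 x) (fun x _ => hdv2 x) i3a i3b i3c
  -- assemble
  have iB : Integrable fun x => (v x ^ 3 * (v3 x + 3 * v x ^ 2 * v1 x)) * f x :=
    (((dv0.pow 2).mul dw').mulB hcf hb0).integrable
  have split1 : (fun x => (-(v1 x) * (v4 x + (6 * v x * v1 x ^ 2 + 3 * v x ^ 2 * v2 x))
        + v x ^ 3 * (v3 x + 3 * v x ^ 2 * v1 x)) * f x)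
      = fun x => (v x ^ 3 * (v3 x + 3 * v x ^ 2 * v1 x)) * f x
        - (v1 x * f x) * (v4 x + (6 * v x * v1 x ^ 2 + 3 * v x ^ 2 * v2 x)) :=
    funext fun x => by ring
  rw [split1, integral_sub iB i1a, IBP1, sub_neg_eq_add]
  have iWW : Integrable fun x => f x * ((v2 x + v x ^ 3) * (v3 x + 3 * v x ^ 2 * v1 x)) := i2a
  have iJ3b : Integrable fun x => 3 * v1 x ^ 2 * v x ^ 2 * F1 x :=
    ((((dv1.pow 1).const_mul 3).mul (dv0.pow 1)).mulB hcf1 hb1).integrable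
  have iJ3 : Integrable fun x => (v1 x * F1 x) * v3 x + 3 * v1 x ^ 2 * v x ^ 2 * F1 x :=
    i3a.add iJ3b
  have split2 : (fun x => (v x ^ 3 * (v3 x + 3 * v x ^ 2 * v1 x)) * f x
        + (v2 x * f x + v1 x * F1 x) * (v3 x + 3 * v x ^ 2 * v1 x))
      = fun x => f x * ((v2 x + v x ^ 3) * (v3 x + 3 * v x ^ 2 * v1 x))
        + ((v1 x * F1 x) * v3 x + 3 * v1 x ^ 2 * v x ^ 2 * F1 x) :=
    funext fun x => by ring
  rw [← integral_add iB i1b, split2, integral_add iWW iJ3, IBP2, integral_add i3a iJ3b, IBP3]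
  have iJ2a : Integrable fun x => v2 x ^ 2 * F1 x := ((dv2.pow 1).mulB hcf1 hb1).integrable
  have iJ2b : Integrable fun x => v2 x * v1 x * F2 x := ((dv2.mul dv1).mulB hcf2 hb2).integrable
  have splitJ2 : (fun x => (v2 x * F1 x + v1 x * F2 x) * v2 x)
      = fun x => v2 x ^ 2 * F1 x + v2 x * v1 x * F2 x := funext fun x => by ring
  have splitT : (fun x => (-(1 / 2) * (v2 x + v x ^ 3) ^ 2 - v2 x ^ 2
        + 3 * v1 x ^ 2 * v x ^ 2) * F1 x)
      = fun x => (-(F1 x * (1 / 2 * (v2 x + v x ^ 3) ^ 2)) + -(v2 x ^ 2 * F1 x))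
        + 3 * v1 x ^ 2 * v x ^ 2 * F1 x := funext fun x => by ring
  have iT2 : Integrable fun x => -(F1 x * (1 / 2 * (v2 x + v x ^ 3) ^ 2)) := i2b.neg
  have iT3 : Integrable fun x => -(v2 x ^ 2 * F1 x) := iJ2a.neg
  have iT23 : Integrable fun x => -(F1 x * (1 / 2 * (v2 x + v x ^ 3) ^ 2)) + -(v2 x ^ 2 * F1 x) :=
    iT2.add iT3
  rw [splitJ2, integral_add iJ2a iJ2b, splitT, integral_add iT23 iJ3b,
    integral_add iT2 iT3, integral_neg, integral_neg]
  ring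


end LEE

open MeasureTheory LEE

theorem localized_energy_evolution (u : ℝ → ℝ → ℝ)
    (hu : ContDiff ℝ (⊤ : ℕ∞) (Function.uncurry u))
    (hPDE : ∀ t x : ℝ,
      deriv (fun s : ℝ => u s x) t
        + deriv (fun y : ℝ => deriv (deriv (u t)) y + (u t y) ^ 3) x = 0)
    (hdecay : ∀ n k : ℕ, ∃ C : ℝ, ∀ t x : ℝ,
      |iteratedDeriv k (u t) x| * (1 + |x|) ^ n ≤ C)
    (hdecayt : ∀ n : ℕ, ∃ C : ℝ, ∀ t x : ℝ,
      |deriv (fun s : ℝ => u s x) t| * (1 + |x|) ^ n ≤ C)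
    (f : ℝ → ℝ) (hf : ContDiff ℝ 2 f)
    (hfb : ∃ C : ℝ, ∀ x : ℝ, |f x| + |deriv f x| + |deriv (deriv f) x| ≤ C) :
    ∀ t : ℝ,
      HasDerivAt
        (fun s : ℝ => ∫ x : ℝ, ((1 / 2) * (deriv (u s) x) ^ 2 - (1 / 4) * (u s x) ^ 4) * f x)
        ((∫ x : ℝ,
            (-(1 / 2) * (deriv (deriv (u t)) x + (u t x) ^ 3) ^ 2
              - (deriv (deriv (u t)) x) ^ 2
              + 3 * (deriv (u t) x) ^ 2 * (u t x) ^ 2) * deriv f x)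
          - ∫ x : ℝ, deriv (deriv (u t)) x * deriv (u t) x * deriv (deriv f) x) t := by
  obtain ⟨Cf, hCf⟩ := hfb
  intro t
  set U := Function.uncurry u with hUdef
  -- smoothness of slices
  have hus : ∀ s, ContDiff ℝ (⊤ : ℕ∞) (u s) := fun s =>
    hu.comp ((contDiff_const (c := s)).prodMk contDiff_id)
  have husI : ∀ s, ContDiff ℝ ∞ (u s) := fun s => (hus s).of_le (by simp)
  -- partial derivative facts
  have hg2 : ContDiff ℝ (⊤ : ℕ∞) (fun p : ℝ × ℝ => fderiv ℝ U p (0, 1)) := contDiff_pd hu _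
  have hg1 : ContDiff ℝ (⊤ : ℕ∞) (fun p : ℝ × ℝ => fderiv ℝ U p (1, 0)) := contDiff_pd hu _
  have ha2 : ∀ s x, HasDerivAt (u s) (fderiv ℝ U (s, x) (0, 1)) x := fun s x =>
    hasDerivAt_snd hu s x
  have ed2 : ∀ s, deriv (u s) = fun x => fderiv ℝ U (s, x) (0, 1) := fun s =>
    funext fun x => (ha2 s x).deriv
  have ha1 : ∀ s x, HasDerivAt (fun r => u r x) (fderiv ℝ U (s, x) (1, 0)) s := fun s x =>
    hasDerivAt_fst hu s x
  -- time-derivative of the spatial derivative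
  have hm : ∀ s x, HasDerivAt (fun r => deriv (u r) x)
      (fderiv ℝ (fun p : ℝ × ℝ => fderiv ℝ U p (0, 1)) (s, x) (1, 0)) s := by
    intro s x
    have h := hasDerivAt_fst hg2 s x
    have e : (fun r => deriv (u r) x) = fun r => fderiv ℝ U (r, x) (0, 1) :=
      funext fun r => congrFun (ed2 r) x
    rw [e]; exact h
  -- PDE rewriting of time derivative
  have hPDE' : ∀ s x, fderiv ℝ U (s, x) (1, 0)
      = -(deriv (fun y => deriv (deriv (u s)) y + u s y ^ 3) x) := by
    intro s x
    have h := hPDE s x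
    rw [(ha1 s x).deriv] at h
    linarith
  -- Clairaut + PDE : mixed derivative in spatial form
  have hmix : ∀ s x, fderiv ℝ (fun p : ℝ × ℝ => fderiv ℝ U p (0, 1)) (s, x) (1, 0)
      = -(deriv (deriv (fun y => deriv (deriv (u s)) y + u s y ^ 3)) x) := by
    intro s x
    have e0 := pd_comm hu (s, x) (0, 1) (1, 0)
    have e1 : fderiv ℝ (fun p : ℝ × ℝ => fderiv ℝ U p (1, 0)) (s, x) (0, 1)
        = deriv (fun y => fderiv ℝ U (s, y) (1, 0)) x := ((hasDerivAt_snd hg1 s x).deriv).symm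
    have e2 : (fun y => fderiv ℝ U (s, y) (1, 0))
        = fun y => -(deriv (fun z => deriv (deriv (u s)) z + u s z ^ 3) y) :=
      funext fun y => hPDE' s y
    rw [e0, e1, e2, deriv.fun_neg]
  -- constants
  obtain ⟨B0, hB0⟩ := hdecay 0 0
  obtain ⟨B1, hB1⟩ := hdecay 0 1
  obtain ⟨D0, hD0⟩ := hdecay 2 0
  obtain ⟨D1, hD1⟩ := hdecay 2 1
  obtain ⟨D2, hD2⟩ := hdecay 2 2
  obtain ⟨D4, hD4⟩ := hdecay 2 4
  obtain ⟨Ct, hCt⟩ := hdecayt 2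
  have b0 : ∀ s x, |u s x| ≤ B0 := fun s x => by
    have h := hB0 s x; rwa [iteratedDeriv_zero, pow_zero, mul_one] at h
  have b1 : ∀ s x, |deriv (u s) x| ≤ B1 := fun s x => by
    have h := hB1 s x; rwa [iteratedDeriv_one, pow_zero, mul_one] at h
  have d0 : ∀ s x, |u s x| ≤ D0 * (1 + x ^ 2)⁻¹ := fun s x =>
    decay2 (by have h := hD0 s x; rwa [iteratedDeriv_zero] at h)
  have d1 : ∀ s x, |deriv (u s) x| ≤ D1 * (1 + x ^ 2)⁻¹ := fun s x =>
    decay2 (by have h := hD1 s x; rwa [iteratedDeriv_one] at h)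
  have d2 : ∀ s x, |deriv (deriv (u s)) x| ≤ D2 * (1 + x ^ 2)⁻¹ := fun s x =>
    decay2 (by have h := hD2 s x; rwa [iter2] at h)
  have d4 : ∀ s x, |deriv (deriv (deriv (deriv (u s)))) x| ≤ D4 * (1 + x ^ 2)⁻¹ := fun s x =>
    decay2 (by have h := hD4 s x; rwa [iter4] at h)
  have dt : ∀ s x, |fderiv ℝ U (s, x) (1, 0)| ≤ Ct * (1 + x ^ 2)⁻¹ := fun s x =>
    decay2 (by have h := hCt s x; rwa [(ha1 s x).deriv] at h)
  have nB0 : 0 ≤ B0 := le_trans (abs_nonneg _) (b0 0 0)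
  have nB1 : 0 ≤ B1 := le_trans (abs_nonneg _) (b1 0 0)
  have nD1 : 0 ≤ D1 := le_trans (by positivity) (hD1 0 0)
  have nD2 : 0 ≤ D2 := le_trans (by positivity) (hD2 0 0)
  have nD4 : 0 ≤ D4 := le_trans (by positivity) (hD4 0 0)
  have nCt : 0 ≤ Ct := le_trans (by positivity) (hCt 0 0)
  have nCf : 0 ≤ Cf := le_trans (by positivity) (hCf 0)
  have hb0f : ∀ x, |f x| ≤ Cf := fun x => by
    have := hCf x; have := abs_nonneg (deriv f x); have := abs_nonneg (deriv (deriv f) x); linarith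
  -- bound on the mixed derivative, uniform in s
  have bmix : ∀ s x, |fderiv ℝ (fun p : ℝ × ℝ => fderiv ℝ U p (0, 1)) (s, x) (1, 0)|
      ≤ (D4 + 6 * B0 * B1 * D1 + 3 * B0 ^ 2 * D2) * (1 + x ^ 2)⁻¹ := by
    intro s x
    have hE : (0:ℝ) ≤ (1 + x ^ 2)⁻¹ := by positivity
    have hw : deriv (deriv (fun y => deriv (deriv (u s)) y + u s y ^ 3)) x
        = deriv (deriv (deriv (deriv (u s)))) x
          + (6 * u s x * deriv (u s) x ^ 2 + 3 * u s x ^ 2 * deriv (deriv (u s)) x) :=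
      congrFun (wderiv (u s) (husI s)).2 x
    rw [hmix s x, abs_neg, hw]
    have h1 := d4 s x
    have h2 : |6 * u s x * deriv (u s) x ^ 2| ≤ 6 * B0 * B1 * D1 * (1 + x ^ 2)⁻¹ := by
      rw [abs_mul, abs_mul, abs_pow, show |(6:ℝ)| = 6 by norm_num]
      have hp : |deriv (u s) x| ^ 2 ≤ B1 * (D1 * (1 + x ^ 2)⁻¹) := by
        rw [sq]
        exact mul_le_mul (b1 s x) (d1 s x) (abs_nonneg _) nB1
      calc 6 * |u s x| * |deriv (u s) x| ^ 2 ≤ 6 * B0 * (B1 * (D1 * (1 + x ^ 2)⁻¹)) :=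
            mul_le_mul (mul_le_mul_of_nonneg_left (b0 s x) (by norm_num)) hp
              (by positivity) (by positivity)
        _ = 6 * B0 * B1 * D1 * (1 + x ^ 2)⁻¹ := by ring
    have h3 : |3 * u s x ^ 2 * deriv (deriv (u s)) x| ≤ 3 * B0 ^ 2 * D2 * (1 + x ^ 2)⁻¹ := by
      rw [abs_mul, abs_mul, abs_pow, show |(3:ℝ)| = 3 by norm_num]
      have hp : |u s x| ^ 2 ≤ B0 ^ 2 := by
        have := b0 s x; have := abs_nonneg (u s x); nlinarith
      calc 3 * |u s x| ^ 2 * |deriv (deriv (u s)) x| ≤ 3 * B0 ^ 2 * (D2 * (1 + x ^ 2)⁻¹) :=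
            mul_le_mul (mul_le_mul_of_nonneg_left hp (by norm_num)) (d2 s x)
              (abs_nonneg _) (by positivity)
        _ = 3 * B0 ^ 2 * D2 * (1 + x ^ 2)⁻¹ := by ring
    have tri : |deriv (deriv (deriv (deriv (u s)))) x
          + (6 * u s x * deriv (u s) x ^ 2 + 3 * u s x ^ 2 * deriv (deriv (u s)) x)|
        ≤ |deriv (deriv (deriv (deriv (u s)))) x|
          + (|6 * u s x * deriv (u s) x ^ 2| + |3 * u s x ^ 2 * deriv (deriv (u s)) x|) :=
      (abs_add_le _ _).trans (add_le_add le_rfl (abs_add_le _ _))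
    have expand : (D4 + 6 * B0 * B1 * D1 + 3 * B0 ^ 2 * D2) * (1 + x ^ 2)⁻¹
        = D4 * (1 + x ^ 2)⁻¹ + (6 * B0 * B1 * D1 * (1 + x ^ 2)⁻¹
          + 3 * B0 ^ 2 * D2 * (1 + x ^ 2)⁻¹) := by ring
    rw [expand]
    exact tri.trans (add_le_add h1 (add_le_add h2 h3))
  -- global bound on the time derivative of the integrand
  have tri' : ∀ a b : ℝ, |a - b| ≤ |a| + |b| := fun a b => by
    rw [sub_eq_add_neg]
    simpa [abs_neg] using abs_add_le a (-b)
  have hFbound : ∀ s x, |(fderiv ℝ U (s, x) (0, 1)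
        * fderiv ℝ (fun p : ℝ × ℝ => fderiv ℝ U p (0, 1)) (s, x) (1, 0)
        - u s x ^ 3 * fderiv ℝ U (s, x) (1, 0)) * f x|
      ≤ (B1 * (D4 + 6 * B0 * B1 * D1 + 3 * B0 ^ 2 * D2) + B0 ^ 3 * Ct) * Cf
        * (1 + x ^ 2)⁻¹ := by
    intro s x
    have hg2b : |fderiv ℝ U (s, x) (0, 1)| ≤ B1 := by
      rw [← congrFun (ed2 s) x]; exact b1 s x
    have hcube : |u s x| ^ 3 ≤ B0 ^ 3 := by
      exact pow_le_pow_left₀ (abs_nonneg _) (b0 s x) 3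
    have h1 : |fderiv ℝ U (s, x) (0, 1)
          * fderiv ℝ (fun p : ℝ × ℝ => fderiv ℝ U p (0, 1)) (s, x) (1, 0)
          - u s x ^ 3 * fderiv ℝ U (s, x) (1, 0)|
        ≤ B1 * ((D4 + 6 * B0 * B1 * D1 + 3 * B0 ^ 2 * D2) * (1 + x ^ 2)⁻¹)
          + B0 ^ 3 * (Ct * (1 + x ^ 2)⁻¹) := by
      refine (tri' _ _).trans ?_
      rw [abs_mul, abs_mul, abs_pow]
      exact add_le_add
        (mul_le_mul hg2b (bmix s x) (abs_nonneg _) nB1)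
        (mul_le_mul hcube (dt s x) (abs_nonneg _) (by positivity))
    rw [abs_mul]
    calc |fderiv ℝ U (s, x) (0, 1)
          * fderiv ℝ (fun p : ℝ × ℝ => fderiv ℝ U p (0, 1)) (s, x) (1, 0)
          - u s x ^ 3 * fderiv ℝ U (s, x) (1, 0)| * |f x|
        ≤ (B1 * ((D4 + 6 * B0 * B1 * D1 + 3 * B0 ^ 2 * D2) * (1 + x ^ 2)⁻¹)
            + B0 ^ 3 * (Ct * (1 + x ^ 2)⁻¹)) * Cf :=
          mul_le_mul h1 (hb0f x) (abs_nonneg _) (by positivity)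
      _ = (B1 * (D4 + 6 * B0 * B1 * D1 + 3 * B0 ^ 2 * D2) + B0 ^ 3 * Ct) * Cf
            * (1 + x ^ 2)⁻¹ := by ring
  -- Dec atoms at time t
  have hDecT : ∀ k, Dec (iteratedDeriv k (u t)) := fun k => by
    obtain ⟨C0, h0⟩ := hdecay 0 k
    obtain ⟨C2, h2⟩ := hdecay 2 k
    refine dec_of_decay ?_ (fun x => h0 t x) (fun x => h2 t x)
    rw [iteratedDeriv_eq_iterate]
    exact (ContDiff.iterate_deriv k (husI t)).continuous
  have decD0 : Dec (u t) := by have h := hDecT 0; rwa [iteratedDeriv_zero] at h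
  have decD1 : Dec (deriv (u t)) := by have h := hDecT 1; rwa [iteratedDeriv_one] at h
  have hcf : Continuous f := hf.continuous
  -- integrability of the integrand at time t
  have hFint : Integrable (fun x : ℝ =>
      ((1 / 2) * (deriv (u t) x) ^ 2 - (1 / 4) * (u t x) ^ 4) * f x) :=
    ((((decD1.pow 1).const_mul (1 / 2)).sub ((decD0.pow 3).const_mul (1 / 4))).mulB
      hcf hb0f).integrable
  -- measurability
  have hcds : ∀ s, Continuous (deriv (u s)) := fun s =>
    ((contDiff_infty_iff_deriv.mp (husI s)).2).continuous
  have meas : ∀ᶠ s in 𝓝 t, AEStronglyMeasurable (fun x : ℝ =>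
      ((1 / 2) * (deriv (u s) x) ^ 2 - (1 / 4) * (u s x) ^ 4) * f x) volume :=
    Filter.Eventually.of_forall fun s =>
      (((continuous_const.mul ((hcds s).pow 2)).sub
        (continuous_const.mul ((hus s).continuous.pow 4))).mul hcf).aestronglyMeasurable
  have cp : Continuous fun x : ℝ => ((t, x) : ℝ × ℝ) := continuous_const.prodMk continuous_id
  have hF'meas : AEStronglyMeasurable (fun x : ℝ =>
      (fderiv ℝ U (t, x) (0, 1)
        * fderiv ℝ (fun p : ℝ × ℝ => fderiv ℝ U p (0, 1)) (t, x) (1, 0)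
        - u t x ^ 3 * fderiv ℝ U (t, x) (1, 0)) * f x) volume := by
    have c1 : Continuous fun x : ℝ => fderiv ℝ U (t, x) (0, 1) := hg2.continuous.comp cp
    have c2 : Continuous fun x : ℝ =>
        fderiv ℝ (fun p : ℝ × ℝ => fderiv ℝ U p (0, 1)) (t, x) (1, 0) :=
      (contDiff_pd hg2 (1, 0)).continuous.comp cp
    have c3 : Continuous fun x : ℝ => fderiv ℝ U (t, x) (1, 0) := hg1.continuous.comp cp
    exact (((c1.mul c2).sub (((hus t).continuous.pow 3).mul c3)).mul hcf).aestronglyMeasurable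
  -- differentiability in time with the right derivative
  have h_diff : ∀ᵐ x : ℝ ∂volume, ∀ s ∈ Metric.ball t 1,
      HasDerivAt (fun r : ℝ => ((1 / 2) * (deriv (u r) x) ^ 2 - (1 / 4) * (u r x) ^ 4) * f x)
        ((fderiv ℝ U (s, x) (0, 1)
          * fderiv ℝ (fun p : ℝ × ℝ => fderiv ℝ U p (0, 1)) (s, x) (1, 0)
          - u s x ^ 3 * fderiv ℝ U (s, x) (1, 0)) * f x) s := by
    refine ae_of_all _ fun x s _ => ?_
    have h := ((((hm s x).fun_pow 2).const_mul ((1:ℝ) / 2)).fun_sub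
      (((ha1 s x).fun_pow 4).const_mul ((1:ℝ) / 4))).mul_const (f x)
    have e2 : deriv (u s) x = fderiv ℝ U (s, x) (0, 1) := congrFun (ed2 s) x
    exact h.congr_deriv (by rw [e2]; push_cast; ring)
  have h_bound : ∀ᵐ x : ℝ ∂volume, ∀ s ∈ Metric.ball t 1,
      ‖(fderiv ℝ U (s, x) (0, 1)
          * fderiv ℝ (fun p : ℝ × ℝ => fderiv ℝ U p (0, 1)) (s, x) (1, 0)
          - u s x ^ 3 * fderiv ℝ U (s, x) (1, 0)) * f x‖
        ≤ (B1 * (D4 + 6 * B0 * B1 * D1 + 3 * B0 ^ 2 * D2) + B0 ^ 3 * Ct) * Cf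
          * (1 + x ^ 2)⁻¹ := by
    refine ae_of_all _ fun x s _ => ?_
    rw [Real.norm_eq_abs]
    exact hFbound s x
  have main := hasDerivAt_integral_of_dominated_loc_of_deriv_le
    (F := fun s x => ((1 / 2) * (deriv (u s) x) ^ 2 - (1 / 4) * (u s x) ^ 4) * f x)
    (F' := fun s x => (fderiv ℝ U (s, x) (0, 1)
      * fderiv ℝ (fun p : ℝ × ℝ => fderiv ℝ U p (0, 1)) (s, x) (1, 0)
      - u s x ^ 3 * fderiv ℝ U (s, x) (1, 0)) * f x)
    (bound := fun x => (B1 * (D4 + 6 * B0 * B1 * D1 + 3 * B0 ^ 2 * D2) + B0 ^ 3 * Ct) * Cf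
      * (1 + x ^ 2)⁻¹)
    (Metric.ball_mem_nhds t one_pos) meas hFint hF'meas h_bound
    (integrable_inv_one_add_sq.const_mul _) h_diff
  have key : (∫ x : ℝ, (fderiv ℝ U (t, x) (0, 1)
        * fderiv ℝ (fun p : ℝ × ℝ => fderiv ℝ U p (0, 1)) (t, x) (1, 0)
        - u t x ^ 3 * fderiv ℝ U (t, x) (1, 0)) * f x)
      = (∫ x : ℝ,
            (-(1 / 2) * (deriv (deriv (u t)) x + (u t x) ^ 3) ^ 2
              - (deriv (deriv (u t)) x) ^ 2
              + 3 * (deriv (u t) x) ^ 2 * (u t x) ^ 2) * deriv f x)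
          - ∫ x : ℝ, deriv (deriv (u t)) x * deriv (u t) x * deriv (deriv f) x := by
    have e : (fun x : ℝ => (fderiv ℝ U (t, x) (0, 1)
          * fderiv ℝ (fun p : ℝ × ℝ => fderiv ℝ U p (0, 1)) (t, x) (1, 0)
          - u t x ^ 3 * fderiv ℝ U (t, x) (1, 0)) * f x)
        = fun x : ℝ => (-(deriv (u t) x)
            * deriv (deriv (fun y => deriv (deriv (u t)) y + u t y ^ 3)) x
            + (u t x) ^ 3 * deriv (fun y => deriv (deriv (u t)) y + u t y ^ 3) x) * f x := by
      funext x
      rw [hmix t x, hPDE' t x, ← congrFun (ed2 t) x]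
      ring
    rw [e]
    exact spatial (u t) f (hus t) hDecT hf hCf
  exact key ▸ main.2
end

section
/- Let u : ℝ × ℝ → ℝ be a smooth, rapidly decaying solution of u_t + (u_xx + u^3)_x = 0 and let f : ℝ → ℝ be a C^3 function with bounded derivatives, independent of time. Then d/dt ∫_ℝ [(1/2)u_xx^2 − (5/2)u^2 u_x^2 + (1/4)u^6] f dx = ∫_ℝ [−(3/2)u_xxx^2 + 9 u_xx^2 u^2 + 15 u_x^2 u u_xx + (9/16)u^8 + (1/4)u_x^4 + (3/2)u_xx u^5 − (45/4)u^4 u_x^2] f' dx + 5∫_ℝ u^2 u_x u_xx f'' dx + (1/2)∫_ℝ u_xx^2 f''' dx. -/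
open MeasureTheory Function Filter

private lemma mkdv_pd_repr {g : ℝ → ℝ → ℝ} (hg : ContDiff ℝ (⊤ : ℕ∞) (uncurry g)) (t x : ℝ) :
    HasDerivAt (g t) (fderiv ℝ (uncurry g) (t, x) (0, 1)) x := by
  have h1 : HasDerivAt (fun y : ℝ => ((t : ℝ), y)) ((0 : ℝ), (1 : ℝ)) x :=
    (hasDerivAt_const x t).prodMk (hasDerivAt_id x)
  exact ((hg.differentiable (by simp) (t, x)).hasFDerivAt).comp_hasDerivAt x h1

private lemma mkdv_pt_repr {g : ℝ → ℝ → ℝ} (hg : ContDiff ℝ (⊤ : ℕ∞) (uncurry g)) (t x : ℝ) :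
    HasDerivAt (fun s => g s x) (fderiv ℝ (uncurry g) (t, x) (1, 0)) t := by
  have h1 : HasDerivAt (fun s : ℝ => (s, (x : ℝ))) ((1 : ℝ), (0 : ℝ)) t :=
    (hasDerivAt_id t).prodMk (hasDerivAt_const t x)
  exact ((hg.differentiable (by simp) (t, x)).hasFDerivAt).comp_hasDerivAt t h1

private lemma pd_smooth {g : ℝ → ℝ → ℝ} (hg : ContDiff ℝ (⊤ : ℕ∞) (uncurry g)) :
    ContDiff ℝ (⊤ : ℕ∞) (uncurry (fun t x => deriv (g t) x)) := by
  have h : uncurry (fun t x => deriv (g t) x)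
      = fun p : ℝ × ℝ => fderiv ℝ (uncurry g) p (0, 1) := by
    funext p
    exact (mkdv_pd_repr hg p.1 p.2).deriv
  rw [h]
  exact (hg.fderiv_right (by simp)).clm_apply contDiff_const

private lemma slice_x {g : ℝ → ℝ → ℝ} (hg : ContDiff ℝ (⊤ : ℕ∞) (uncurry g)) (t : ℝ) :
    ContDiff ℝ (⊤ : ℕ∞) (g t) := hg.comp (contDiff_const.prodMk contDiff_id)

private lemma slice_t {g : ℝ → ℝ → ℝ} (hg : ContDiff ℝ (⊤ : ℕ∞) (uncurry g)) (x : ℝ) :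
    ContDiff ℝ (⊤ : ℕ∞) (fun s => g s x) := hg.comp (contDiff_id.prodMk contDiff_const)

private lemma mixed {g : ℝ → ℝ → ℝ} (hg : ContDiff ℝ (⊤ : ℕ∞) (uncurry g)) (t x : ℝ) :
    deriv (fun s => deriv (g s) x) t = deriv (fun y => deriv (fun s => g s y) t) x := by
  set G := uncurry g with hG
  set D := fderiv ℝ G with hD
  have hDdiff : Differentiable ℝ D := (hg.fderiv_right (m := (⊤ : ℕ∞)) (by simp)).differentiable (by simp)
  have hDG : ∀ p, HasFDerivAt G (D p) p := fun p =>
    ((hg.differentiable (by simp)) p).hasFDerivAt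
  set D2 := fderiv ℝ D (t, x) with hD2
  have hD2at : HasFDerivAt D D2 (t, x) := (hDdiff (t, x)).hasFDerivAt
  have hsymm : ∀ v w, D2 v w = D2 w v := second_derivative_symmetric hDG hD2at
  have hL : HasDerivAt (fun s => deriv (g s) x) (D2 (1, 0) (0, 1)) t := by
    have h1 : (fun s => deriv (g s) x) = fun s => D (s, x) (0, 1) := by
      funext s; exact ((mkdv_pd_repr hg s x).deriv).symm ▸ rfl
    rw [h1]
    have h2 : HasFDerivAt (fun p : ℝ × ℝ => D p ((0 : ℝ), (1 : ℝ)))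
        ((D (t, x)).comp (0 : ℝ × ℝ →L[ℝ] ℝ × ℝ) + D2.flip ((0 : ℝ), (1 : ℝ))) (t, x) :=
      hD2at.clm_apply (hasFDerivAt_const _ _)
    have h3 : HasDerivAt (fun s : ℝ => (s, (x : ℝ))) ((1 : ℝ), (0 : ℝ)) t :=
      (hasDerivAt_id t).prodMk (hasDerivAt_const t x)
    have := h2.comp_hasDerivAt t h3
    simp at this
    exact this
  have hR : HasDerivAt (fun y => deriv (fun s => g s y) t) (D2 (0, 1) (1, 0)) x := by
    have h1 : (fun y => deriv (fun s => g s y) t) = fun y => D (t, y) (1, 0) := by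
      funext y; exact ((mkdv_pt_repr hg t y).deriv).symm ▸ rfl
    rw [h1]
    have h2 : HasFDerivAt (fun p : ℝ × ℝ => D p ((1 : ℝ), (0 : ℝ)))
        ((D (t, x)).comp (0 : ℝ × ℝ →L[ℝ] ℝ × ℝ) + D2.flip ((1 : ℝ), (0 : ℝ))) (t, x) :=
      hD2at.clm_apply (hasFDerivAt_const _ _)
    have h3 : HasDerivAt (fun y : ℝ => ((t : ℝ), y)) ((0 : ℝ), (1 : ℝ)) x :=
      (hasDerivAt_const x t).prodMk (hasDerivAt_id x)
    have := h2.comp_hasDerivAt x h3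
    simp at this
    exact this
  rw [hL.deriv, hR.deriv, hsymm]

private def Dec (g : ℝ → ℝ → ℝ) : Prop :=
  ∀ n : ℕ, ∃ C : ℝ, ∀ t x : ℝ, |g t x| * (1 + |x|) ^ n ≤ C

private lemma Dec.congr {g h : ℝ → ℝ → ℝ} (hg : Dec g) (he : ∀ t x, g t x = h t x) :
    Dec h := fun n => by obtain ⟨C, hC⟩ := hg n; exact ⟨C, fun t x => (he t x) ▸ hC t x⟩

private lemma Dec.add {g h : ℝ → ℝ → ℝ} (hg : Dec g) (hh : Dec h) :
    Dec (fun t x => g t x + h t x) := by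
  intro n
  obtain ⟨C1, h1⟩ := hg n; obtain ⟨C2, h2⟩ := hh n
  refine ⟨C1 + C2, fun t x => ?_⟩
  have := h1 t x; have := h2 t x
  have habs : |g t x + h t x| ≤ |g t x| + |h t x| := abs_add_le _ _
  nlinarith [pow_pos (by positivity : (0:ℝ) < 1 + |x|) n, abs_nonneg (g t x + h t x)]

private lemma Dec.neg {g : ℝ → ℝ → ℝ} (hg : Dec g) : Dec (fun t x => -g t x) := by
  intro n; obtain ⟨C, hC⟩ := hg n
  exact ⟨C, fun t x => by simpa [abs_neg] using hC t x⟩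

private lemma Dec.sub {g h : ℝ → ℝ → ℝ} (hg : Dec g) (hh : Dec h) :
    Dec (fun t x => g t x - h t x) := by
  have := hg.add hh.neg
  exact this.congr (fun t x => by ring)

private lemma Dec.mul {g h : ℝ → ℝ → ℝ} (hg : Dec g) (hh : Dec h) :
    Dec (fun t x => g t x * h t x) := by
  intro n
  obtain ⟨C1, h1⟩ := hg n; obtain ⟨C2, h2⟩ := hh 0
  refine ⟨C1 * C2, fun t x => ?_⟩
  have e1 := h1 t x
  have e2 := h2 t x
  rw [pow_zero, mul_one] at e2
  have : |g t x * h t x| * (1 + |x|) ^ n = (|g t x| * (1 + |x|) ^ n) * |h t x| := by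
    rw [abs_mul]; ring
  rw [this]
  exact mul_le_mul e1 e2 (abs_nonneg _) (le_trans (by positivity) e1)

private lemma Dec.const_mul {g : ℝ → ℝ → ℝ} (c : ℝ) (hg : Dec g) :
    Dec (fun t x => c * g t x) := by
  intro n; obtain ⟨C, hC⟩ := hg n
  refine ⟨|c| * C, fun t x => ?_⟩
  have := hC t x
  rw [abs_mul, mul_assoc]
  have hc : (0:ℝ) ≤ |c| := abs_nonneg c
  nlinarith

private lemma Dec.pow {g : ℝ → ℝ → ℝ} (hg : Dec g) : ∀ n : ℕ, 1 ≤ n →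
    Dec (fun t x => g t x ^ n)
  | 1, _ => hg.congr (fun t x => by ring)
  | (n+2), _ => by
    have ih := Dec.pow hg (n+1) (by omega)
    exact (ih.mul hg).congr (fun t x => by ring)

private lemma Dec.bound2 {g : ℝ → ℝ → ℝ} (hg : Dec g) :
    ∃ C : ℝ, ∀ t x : ℝ, |g t x| ≤ C * (1 + x ^ 2)⁻¹ := by
  obtain ⟨C, hC⟩ := hg 2
  refine ⟨C, fun t x => ?_⟩
  have h1 : (1:ℝ) + x ^ 2 ≤ (1 + |x|) ^ 2 := by
    have := abs_nonneg x
    nlinarith [sq_abs x]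
  have hpos : (0:ℝ) < 1 + x ^ 2 := by positivity
  rw [show C * (1 + x ^ 2)⁻¹ = C / (1 + x ^ 2) by ring, le_div_iff₀ hpos]
  have := hC t x
  nlinarith [abs_nonneg (g t x)]

private lemma mkdv_integrable_of_bound {k : ℝ → ℝ} (hk : Continuous k) (C : ℝ)
    (h : ∀ x, |k x| ≤ C * (1 + x ^ 2)⁻¹) : Integrable k := by
  refine (integrable_inv_one_add_sq.const_mul C).mono' hk.aestronglyMeasurable ?_
  exact ae_of_all _ fun x => by simpa [Real.norm_eq_abs] using h x

private lemma mkdv_abs_mul_le {a b K C : ℝ} (ha : |a| ≤ K) (hb : |b| ≤ C) : |a * b| ≤ K * C := by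
  rw [abs_mul]; exact mul_le_mul ha hb (abs_nonneg b) (le_trans (abs_nonneg a) ha)

private lemma integrable_dec {g : ℝ → ℝ → ℝ} (hg : Dec g) {h : ℝ → ℝ} {C : ℝ}
    (hC : ∀ x, |h x| ≤ C) (t : ℝ) (hc : Continuous (fun x => g t x * h x)) :
    Integrable (fun x => g t x * h x) := by
  obtain ⟨K, hK⟩ := hg.bound2
  refine mkdv_integrable_of_bound hc (K * C) (fun x => ?_)
  calc |g t x * h x| ≤ (K * (1 + x ^ 2)⁻¹) * C := mkdv_abs_mul_le (hK t x) (hC x)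
    _ = K * C * (1 + x ^ 2)⁻¹ := by ring

private lemma tendsto_zero_of_bound {k : ℝ → ℝ} (C : ℝ)
    (h : ∀ x, |k x| ≤ C * (1 + x ^ 2)⁻¹) :
    Tendsto k atTop (nhds 0) ∧ Tendsto k atBot (nhds 0) := by
  have hsqT : Tendsto (fun x : ℝ => 1 + x ^ 2) atTop atTop :=
    tendsto_atTop_add_const_left _ 1 (tendsto_pow_atTop two_ne_zero)
  have hsqB : Tendsto (fun x : ℝ => 1 + x ^ 2) atBot atTop := by
    have h1 : Tendsto (fun x : ℝ => 1 + (-x) ^ 2) atBot atTop :=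
      hsqT.comp tendsto_neg_atBot_atTop
    exact h1.congr (fun x => by ring_nf)
  have hT : Tendsto (fun x : ℝ => C * (1 + x ^ 2)⁻¹) atTop (nhds 0) := by
    have := (tendsto_inv_atTop_zero.comp hsqT).const_mul C
    simpa using this
  have hB : Tendsto (fun x : ℝ => C * (1 + x ^ 2)⁻¹) atBot (nhds 0) := by
    have := (tendsto_inv_atTop_zero.comp hsqB).const_mul C
    simpa using this
  constructor
  · exact squeeze_zero_norm (fun x => by simpa [Real.norm_eq_abs] using h x) hT
  · exact squeeze_zero_norm (fun x => by simpa [Real.norm_eq_abs] using h x) hB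

private lemma mkdv_integral_deriv_eq_zero {g g' : ℝ → ℝ} (hd : ∀ x, HasDerivAt g (g' x) x)
    (hi : Integrable g') (h1 : Tendsto g atTop (nhds 0)) (h2 : Tendsto g atBot (nhds 0)) :
    ∫ x : ℝ, g' x = 0 := by
  have ha : ∫ x in Set.Iic (0:ℝ), g' x = g 0 - 0 :=
    integral_Iic_of_hasDerivAt_of_tendsto' (fun x _ => hd x) hi.integrableOn h2
  have hb : ∫ x in Set.Ioi (0:ℝ), g' x = 0 - g 0 :=
    integral_Ioi_of_hasDerivAt_of_tendsto' (fun x _ => hd x) hi.integrableOn h1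
  rw [← intervalIntegral.integral_Iic_add_Ioi (b := (0:ℝ)) hi.integrableOn hi.integrableOn,
    ha, hb]
  ring

set_option maxHeartbeats 4000000 in
open MeasureTheory in
theorem localized_second_energy_evolution (u : ℝ → ℝ → ℝ)
    (hu : ContDiff ℝ (⊤ : ℕ∞) (Function.uncurry u))
    (hPDE : ∀ t x : ℝ,
      deriv (fun s : ℝ => u s x) t
        + deriv (fun y : ℝ => deriv (deriv (u t)) y + (u t y) ^ 3) x = 0)
    (hdecay : ∀ n k : ℕ, ∃ C : ℝ, ∀ t x : ℝ,
      |iteratedDeriv k (u t) x| * (1 + |x|) ^ n ≤ C)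
    (hdecayt : ∀ n : ℕ, ∃ C : ℝ, ∀ t x : ℝ,
      |deriv (fun s : ℝ => u s x) t| * (1 + |x|) ^ n ≤ C)
    (f : ℝ → ℝ) (hf : ContDiff ℝ 3 f)
    (hfb : ∃ C : ℝ, ∀ x : ℝ,
      |f x| + |deriv f x| + |deriv (deriv f) x| + |deriv (deriv (deriv f)) x| ≤ C) :
    ∀ t : ℝ,
      HasDerivAt
        (fun s : ℝ => ∫ x : ℝ,
          ((1 / 2) * (deriv (deriv (u s)) x) ^ 2
            - (5 / 2) * (u s x) ^ 2 * (deriv (u s) x) ^ 2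
            + (1 / 4) * (u s x) ^ 6) * f x)
        ((∫ x : ℝ,
            (-(3 / 2) * (deriv (deriv (deriv (u t))) x) ^ 2
              + 9 * (deriv (deriv (u t)) x) ^ 2 * (u t x) ^ 2
              + 15 * (deriv (u t) x) ^ 2 * u t x * deriv (deriv (u t)) x
              + (9 / 16) * (u t x) ^ 8
              + (1 / 4) * (deriv (u t) x) ^ 4
              + (3 / 2) * deriv (deriv (u t)) x * (u t x) ^ 5
              - (45 / 4) * (u t x) ^ 4 * (deriv (u t) x) ^ 2) * deriv f x)
          + 5 * (∫ x : ℝ,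
              (u t x) ^ 2 * deriv (u t) x * deriv (deriv (u t)) x * deriv (deriv f) x)
          + (1 / 2) * ∫ x : ℝ,
              (deriv (deriv (u t)) x) ^ 2 * deriv (deriv (deriv f)) x) t := by
  intro t
  -- ### facts about f ###
  have ef3 : (3 : WithTop ℕ∞) = 2 + 1 := by norm_num
  have hfC2 : ContDiff ℝ 2 (deriv f) := (contDiff_succ_iff_deriv.mp (ef3 ▸ hf)).2.2
  have ef2 : (2 : WithTop ℕ∞) = 1 + 1 := by norm_num
  have hfC1 : ContDiff ℝ 1 (deriv (deriv f)) := (contDiff_succ_iff_deriv.mp (ef2 ▸ hfC2)).2.2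
  have ef1 : (1 : WithTop ℕ∞) = 0 + 1 := by norm_num
  have hfC0 : ContDiff ℝ 0 (deriv (deriv (deriv f))) :=
    (contDiff_succ_iff_deriv.mp (ef1 ▸ hfC1)).2.2
  have hfd0 : Differentiable ℝ f := hf.differentiable (by norm_num)
  have hfd1 : Differentiable ℝ (deriv f) := hfC2.differentiable (by norm_num)
  have hfd2 : Differentiable ℝ (deriv (deriv f)) := hfC1.differentiable (by norm_num)
  have hfc0 : Continuous f := hfd0.continuous
  have hfc1 : Continuous (deriv f) := hfd1.continuous
  have hfc2 : Continuous (deriv (deriv f)) := hfd2.continuous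
  have hfc3 : Continuous (deriv (deriv (deriv f))) := contDiff_zero.mp hfC0
  have hDf0 : ∀ x : ℝ, HasDerivAt f (deriv f x) x := fun x => (hfd0 x).hasDerivAt
  have hDf1 : ∀ x : ℝ, HasDerivAt (deriv f) (deriv (deriv f) x) x := fun x => (hfd1 x).hasDerivAt
  have hDf2 : ∀ x : ℝ, HasDerivAt (deriv (deriv f)) (deriv (deriv (deriv f)) x) x :=
    fun x => (hfd2 x).hasDerivAt
  obtain ⟨Cf, hCf⟩ := hfb
  have hCf0 : ∀ x : ℝ, |f x| ≤ Cf := fun x => by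
    have h := hCf x
    have := abs_nonneg (deriv f x); have := abs_nonneg (deriv (deriv f) x)
    have := abs_nonneg (deriv (deriv (deriv f)) x); linarith
  have hCf1 : ∀ x : ℝ, |deriv f x| ≤ Cf := fun x => by
    have h := hCf x
    have := abs_nonneg (f x); have := abs_nonneg (deriv (deriv f) x)
    have := abs_nonneg (deriv (deriv (deriv f)) x); linarith
  have hCf2 : ∀ x : ℝ, |deriv (deriv f) x| ≤ Cf := fun x => by
    have h := hCf x
    have := abs_nonneg (f x); have := abs_nonneg (deriv f x)
    have := abs_nonneg (deriv (deriv (deriv f)) x); linarith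
  have hCf3 : ∀ x : ℝ, |deriv (deriv (deriv f)) x| ≤ Cf := fun x => by
    have h := hCf x
    have := abs_nonneg (f x); have := abs_nonneg (deriv f x)
    have := abs_nonneg (deriv (deriv f) x); linarith
  -- ### smoothness ladder ###
  have hsm1 : ContDiff ℝ (⊤ : ℕ∞) (Function.uncurry fun (τ : ℝ) (x : ℝ) => deriv (u τ) x) := pd_smooth hu
  have hsm2 : ContDiff ℝ (⊤ : ℕ∞) (Function.uncurry fun (τ : ℝ) (x : ℝ) => deriv (deriv (u τ)) x) := pd_smooth hsm1
  have hsm3 : ContDiff ℝ (⊤ : ℕ∞) (Function.uncurry fun (τ : ℝ) (x : ℝ) => deriv (deriv (deriv (u τ))) x) := pd_smooth hsm2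
  have hsm4 : ContDiff ℝ (⊤ : ℕ∞) (Function.uncurry fun (τ : ℝ) (x : ℝ) => deriv (deriv (deriv (deriv (u τ)))) x) := pd_smooth hsm3
  have hsm5 : ContDiff ℝ (⊤ : ℕ∞) (Function.uncurry fun (τ : ℝ) (x : ℝ) => deriv (deriv (deriv (deriv (deriv (u τ))))) x) := pd_smooth hsm4
  have hx1 : ∀ s x : ℝ, HasDerivAt (u s) (deriv (u s) x) x :=
    fun s x => ((slice_x hu s).differentiable (by simp) x).hasDerivAt
  have hx2 : ∀ s x : ℝ, HasDerivAt (deriv (u s)) (deriv (deriv (u s)) x) x :=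
    fun s x => ((slice_x hsm1 s).differentiable (by simp) x).hasDerivAt
  have hx3 : ∀ s x : ℝ, HasDerivAt (deriv (deriv (u s))) (deriv (deriv (deriv (u s))) x) x :=
    fun s x => ((slice_x hsm2 s).differentiable (by simp) x).hasDerivAt
  have hx4 : ∀ s x : ℝ, HasDerivAt (deriv (deriv (deriv (u s)))) (deriv (deriv (deriv (deriv (u s)))) x) x :=
    fun s x => ((slice_x hsm3 s).differentiable (by simp) x).hasDerivAt
  have hx5 : ∀ s x : ℝ, HasDerivAt (deriv (deriv (deriv (deriv (u s))))) (deriv (deriv (deriv (deriv (deriv (u s))))) x) x :=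
    fun s x => ((slice_x hsm4 s).differentiable (by simp) x).hasDerivAt
  have hco0 : ∀ s : ℝ, Continuous (u s) := fun s => (slice_x hu s).continuous
  have hco1 : ∀ s : ℝ, Continuous (fun x : ℝ => deriv (u s) x) := fun s => (slice_x hsm1 s).continuous
  have hco2 : ∀ s : ℝ, Continuous (fun x : ℝ => deriv (deriv (u s)) x) := fun s => (slice_x hsm2 s).continuous
  have hco3 : ∀ s : ℝ, Continuous (fun x : ℝ => deriv (deriv (deriv (u s))) x) := fun s => (slice_x hsm3 s).continuous
  have hco4 : ∀ s : ℝ, Continuous (fun x : ℝ => deriv (deriv (deriv (deriv (u s)))) x) := fun s => (slice_x hsm4 s).continuous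
  have hco5 : ∀ s : ℝ, Continuous (fun x : ℝ => deriv (deriv (deriv (deriv (deriv (u s))))) x) := fun s => (slice_x hsm5 s).continuous
  have hdec0 : Dec u := fun n => by
    obtain ⟨C, hC⟩ := hdecay n 0
    exact ⟨C, fun s x => by simpa [iteratedDeriv_zero] using hC s x⟩
  have hdec1 : Dec (fun (s : ℝ) (x : ℝ) => deriv (u s) x) := fun n => by
    obtain ⟨C, hC⟩ := hdecay n 1
    refine ⟨C, fun s x => ?_⟩
    have e : iteratedDeriv 1 (u s) = deriv (u s) := by
      rw [iteratedDeriv_one]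
    have h2 := hC s x
    rw [e] at h2
    exact h2
  have hdec2 : Dec (fun (s : ℝ) (x : ℝ) => deriv (deriv (u s)) x) := fun n => by
    obtain ⟨C, hC⟩ := hdecay n 2
    refine ⟨C, fun s x => ?_⟩
    have e : iteratedDeriv 2 (u s) = deriv (deriv (u s)) := by
      rw [show (2:ℕ) = 1 + 1 from rfl, iteratedDeriv_succ, iteratedDeriv_one]
    have h2 := hC s x
    rw [e] at h2
    exact h2
  have hdec3 : Dec (fun (s : ℝ) (x : ℝ) => deriv (deriv (deriv (u s))) x) := fun n => by
    obtain ⟨C, hC⟩ := hdecay n 3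
    refine ⟨C, fun s x => ?_⟩
    have e : iteratedDeriv 3 (u s) = deriv (deriv (deriv (u s))) := by
      rw [show (3:ℕ) = 2 + 1 from rfl, iteratedDeriv_succ, show (2:ℕ) = 1 + 1 from rfl, iteratedDeriv_succ, iteratedDeriv_one]
    have h2 := hC s x
    rw [e] at h2
    exact h2
  have hdec4 : Dec (fun (s : ℝ) (x : ℝ) => deriv (deriv (deriv (deriv (u s)))) x) := fun n => by
    obtain ⟨C, hC⟩ := hdecay n 4
    refine ⟨C, fun s x => ?_⟩
    have e : iteratedDeriv 4 (u s) = deriv (deriv (deriv (deriv (u s)))) := by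
      rw [show (4:ℕ) = 3 + 1 from rfl, iteratedDeriv_succ, show (3:ℕ) = 2 + 1 from rfl, iteratedDeriv_succ, show (2:ℕ) = 1 + 1 from rfl, iteratedDeriv_succ, iteratedDeriv_one]
    have h2 := hC s x
    rw [e] at h2
    exact h2
  have hdec5 : Dec (fun (s : ℝ) (x : ℝ) => deriv (deriv (deriv (deriv (deriv (u s))))) x) := fun n => by
    obtain ⟨C, hC⟩ := hdecay n 5
    refine ⟨C, fun s x => ?_⟩
    have e : iteratedDeriv 5 (u s) = deriv (deriv (deriv (deriv (deriv (u s))))) := by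
      rw [show (5:ℕ) = 4 + 1 from rfl, iteratedDeriv_succ, show (4:ℕ) = 3 + 1 from rfl, iteratedDeriv_succ, show (3:ℕ) = 2 + 1 from rfl, iteratedDeriv_succ, show (2:ℕ) = 1 + 1 from rfl, iteratedDeriv_succ, iteratedDeriv_one]
    have h2 := hC s x
    rw [e] at h2
    exact h2
  -- ### pointwise PDE ###
  have hpde : ∀ s x : ℝ, deriv (fun τ : ℝ => u τ x) s
      = -(deriv (deriv (deriv (u s))) x) - 3 * (u s x) ^ 2 * deriv (u s) x := by
    intro s x
    have h1 : HasDerivAt (fun y => deriv (deriv (u s)) y + u s y ^ 3)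
        (deriv (deriv (deriv (u s))) x + (3:ℕ) * u s x ^ (3-1) * deriv (u s) x) x :=
      (hx3 s x).add ((hx1 s x).fun_pow 3)
    have h2 := hPDE s x
    rw [h1.deriv] at h2
    push_cast at h2
    linarith
  -- ### x-derivatives of the time-derivative ###
  have hwd1 : ∀ s x : ℝ, HasDerivAt (fun y => deriv (fun τ : ℝ => u τ y) s)
      (-1 * (deriv (deriv (deriv (deriv (u s)))) x) + -6 * (u s x * deriv (u s) x ^ 2) + -3 * (u s x ^ 2 * deriv (deriv (u s)) x)) x := by
    intro s x
    have hfun : (fun y => deriv (fun τ : ℝ => u τ y) s)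
        = fun y => -(deriv (deriv (deriv (u s))) y) - 3 * (u s y) ^ 2 * deriv (u s) y :=
      funext fun y => hpde s y
    rw [hfun]
    have h := ((hx4 s x).neg).sub ((HasDerivAt.const_mul (3:ℝ) ((hx1 s x).fun_pow 2)).mul (hx2 s x))
    refine h.congr_deriv ?_
    push_cast
    ring
  have hwd2 : ∀ s x : ℝ, HasDerivAt (deriv (fun y => deriv (fun τ : ℝ => u τ y) s))
      (-1 * (deriv (deriv (deriv (deriv (deriv (u s))))) x) + -6 * (deriv (u s) x ^ 3) + -18 * (u s x * deriv (u s) x * deriv (deriv (u s)) x) + -3 * (u s x ^ 2 * deriv (deriv (deriv (u s))) x)) x := by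
    intro s x
    have hfun : deriv (fun y => deriv (fun τ : ℝ => u τ y) s)
        = fun y : ℝ => -1 * (deriv (deriv (deriv (deriv (u s)))) y) + -6 * (u s y * deriv (u s) y ^ 2) + -3 * (u s y ^ 2 * deriv (deriv (u s)) y) :=
      funext fun y => (hwd1 s y).deriv
    rw [hfun]
    have h := (((HasDerivAt.const_mul ((-1 : ℝ)) (hx5 s x)).add (HasDerivAt.const_mul ((-6 : ℝ)) ((hx1 s x).mul ((hx2 s x).fun_pow 2)))).add (HasDerivAt.const_mul ((-3 : ℝ)) (((hx1 s x).fun_pow 2).mul (hx3 s x))))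
    refine h.congr_deriv ?_
    push_cast
    ring
  -- ### time derivatives ###
  have ht0 : ∀ s x : ℝ, HasDerivAt (fun τ => u τ x)
      (-(deriv (deriv (deriv (u s))) x) - 3 * (u s x) ^ 2 * deriv (u s) x) s := by
    intro s x
    have h : HasDerivAt (fun τ => u τ x) (deriv (fun τ : ℝ => u τ x) s) s :=
      ((slice_t hu x).differentiable (by simp) s).hasDerivAt
    rwa [hpde s x] at h
  have ht1 : ∀ s x : ℝ, HasDerivAt (fun τ => deriv (u τ) x)
      (-1 * (deriv (deriv (deriv (deriv (u s)))) x) + -6 * (u s x * deriv (u s) x ^ 2) + -3 * (u s x ^ 2 * deriv (deriv (u s)) x)) s := by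
    intro s x
    have h : HasDerivAt (fun τ => deriv (u τ) x) (deriv (fun τ : ℝ => deriv (u τ) x) s) s :=
      ((slice_t hsm1 x).differentiable (by simp) s).hasDerivAt
    have e : deriv (fun τ : ℝ => deriv (u τ) x) s
        = deriv (fun y => deriv (fun τ : ℝ => u τ y) s) x := mixed hu s x
    rw [e, (hwd1 s x).deriv] at h
    exact h
  have ht2 : ∀ s x : ℝ, HasDerivAt (fun τ => deriv (deriv (u τ)) x)
      (-1 * (deriv (deriv (deriv (deriv (deriv (u s))))) x) + -6 * (deriv (u s) x ^ 3) + -18 * (u s x * deriv (u s) x * deriv (deriv (u s)) x) + -3 * (u s x ^ 2 * deriv (deriv (deriv (u s))) x)) s := by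
    intro s x
    have h : HasDerivAt (fun τ => deriv (deriv (u τ)) x)
        (deriv (fun τ : ℝ => deriv (deriv (u τ)) x) s) s :=
      ((slice_t hsm2 x).differentiable (by simp) s).hasDerivAt
    have e1 : deriv (fun τ : ℝ => deriv (deriv (u τ)) x) s
        = deriv (fun y => deriv (fun τ : ℝ => deriv (u τ) y) s) x := mixed hsm1 s x
    have e2 : (fun y => deriv (fun τ : ℝ => deriv (u τ) y) s)
        = deriv (fun y => deriv (fun τ : ℝ => u τ y) s) :=
      funext fun y => mixed hu s y
    rw [e1, e2, (hwd2 s x).deriv] at h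
    exact h
  -- ### time derivative of the integrand ###
  have hFdiff : ∀ s x : ℝ, HasDerivAt (fun σ : ℝ => ((1 / 2) * (deriv (deriv (u σ)) x) ^ 2 - (5 / 2) * (u σ x) ^ 2 * (deriv (u σ) x) ^ 2 + (1 / 4) * (u σ x) ^ 6) * f x)
      ((-1 * (deriv (deriv (u s)) x * deriv (deriv (deriv (deriv (deriv (u s))))) x) + -6 * (deriv (u s) x ^ 3 * deriv (deriv (u s)) x) + -18 * (u s x * deriv (u s) x * deriv (deriv (u s)) x ^ 2) + 5 * (u s x * deriv (u s) x ^ 2 * deriv (deriv (deriv (u s))) x) + -3 * (u s x ^ 2 * deriv (deriv (u s)) x * deriv (deriv (deriv (u s))) x) + 5 * (u s x ^ 2 * deriv (u s) x * deriv (deriv (deriv (deriv (u s)))) x) + 45 * (u s x ^ 3 * deriv (u s) x ^ 3) + 15 * (u s x ^ 4 * deriv (u s) x * deriv (deriv (u s)) x) + -3/2 * (u s x ^ 5 * deriv (deriv (deriv (u s))) x) + -9/2 * (u s x ^ 7 * deriv (u s) x)) * f x) s := by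
    intro s x
    have h := (((HasDerivAt.const_mul ((1 : ℝ)/2) ((ht2 s x).fun_pow 2)).sub
        ((HasDerivAt.const_mul ((5 : ℝ)/2) ((ht0 s x).fun_pow 2)).mul ((ht1 s x).fun_pow 2))).add
        (HasDerivAt.const_mul ((1 : ℝ)/4) ((ht0 s x).fun_pow 6))).mul_const (f x)
    refine h.congr_deriv ?_
    push_cast
    ring
  -- ### decay and continuity of composite expressions ###
  have hdecE : Dec (fun (s : ℝ) (x : ℝ) => (1 / 2) * (deriv (deriv (u s)) x) ^ 2
      - (5 / 2) * (u s x) ^ 2 * (deriv (u s) x) ^ 2 + (1 / 4) * (u s x) ^ 6) :=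
    (((Dec.const_mul (1 / 2) (hdec2.pow 2 (by norm_num))).sub
      ((Dec.const_mul (5 / 2) (hdec0.pow 2 (by norm_num))).mul (hdec1.pow 2 (by norm_num)))).add
      (Dec.const_mul (1 / 4) (hdec0.pow 6 (by norm_num))))
  have hdecEt : Dec (fun (s : ℝ) (x : ℝ) => -1 * (deriv (deriv (u s)) x * deriv (deriv (deriv (deriv (deriv (u s))))) x) + -6 * (deriv (u s) x ^ 3 * deriv (deriv (u s)) x) + -18 * (u s x * deriv (u s) x * deriv (deriv (u s)) x ^ 2) + 5 * (u s x * deriv (u s) x ^ 2 * deriv (deriv (deriv (u s))) x) + -3 * (u s x ^ 2 * deriv (deriv (u s)) x * deriv (deriv (deriv (u s))) x) + 5 * (u s x ^ 2 * deriv (u s) x * deriv (deriv (deriv (deriv (u s)))) x) + 45 * (u s x ^ 3 * deriv (u s) x ^ 3) + 15 * (u s x ^ 4 * deriv (u s) x * deriv (deriv (u s)) x) + -3/2 * (u s x ^ 5 * deriv (deriv (deriv (u s))) x) + -9/2 * (u s x ^ 7 * deriv (u s) x)) :=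
    ((((((((((Dec.const_mul (-1) (hdec2.mul hdec5)).add (Dec.const_mul (-6) ((hdec1.pow 3 (by norm_num)).mul hdec2))).add (Dec.const_mul (-18) ((hdec0.mul hdec1).mul (hdec2.pow 2 (by norm_num))))).add (Dec.const_mul (5) ((hdec0.mul (hdec1.pow 2 (by norm_num))).mul hdec3))).add (Dec.const_mul (-3) (((hdec0.pow 2 (by norm_num)).mul hdec2).mul hdec3))).add (Dec.const_mul (5) (((hdec0.pow 2 (by norm_num)).mul hdec1).mul hdec4))).add (Dec.const_mul (45) ((hdec0.pow 3 (by norm_num)).mul (hdec1.pow 3 (by norm_num))))).add (Dec.const_mul (15) (((hdec0.pow 4 (by norm_num)).mul hdec1).mul hdec2))).add (Dec.const_mul (-3/2) ((hdec0.pow 5 (by norm_num)).mul hdec3))).add (Dec.const_mul (-9/2) ((hdec0.pow 7 (by norm_num)).mul hdec1)))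
  have hdecR : Dec (fun (t : ℝ) (x : ℝ) => (-(3 / 2) * (deriv (deriv (deriv (u t))) x) ^ 2 + 9 * (deriv (deriv (u t)) x) ^ 2 * (u t x) ^ 2 + 15 * (deriv (u t) x) ^ 2 * u t x * deriv (deriv (u t)) x + (9 / 16) * (u t x) ^ 8 + (1 / 4) * (deriv (u t) x) ^ 4 + (3 / 2) * deriv (deriv (u t)) x * (u t x) ^ 5 - (45 / 4) * (u t x) ^ 4 * (deriv (u t) x) ^ 2)) :=
    ((((((Dec.const_mul (-(3 / 2)) (hdec3.pow 2 (by norm_num))).add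
      ((Dec.const_mul (9) (hdec2.pow 2 (by norm_num))).mul (hdec0.pow 2 (by norm_num)))).add
      (((Dec.const_mul (15) (hdec1.pow 2 (by norm_num))).mul hdec0).mul hdec2)).add
      (Dec.const_mul (9 / 16) (hdec0.pow 8 (by norm_num)))).add
      (Dec.const_mul (1 / 4) (hdec1.pow 4 (by norm_num)))).add
      ((Dec.const_mul (3 / 2) hdec2).mul (hdec0.pow 5 (by norm_num)))).sub
      ((Dec.const_mul (45 / 4) (hdec0.pow 4 (by norm_num))).mul (hdec1.pow 2 (by norm_num)))
  have hdecS : Dec (fun (t : ℝ) (x : ℝ) => (u t x) ^ 2 * deriv (u t) x * deriv (deriv (u t)) x) :=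
    ((hdec0.pow 2 (by norm_num)).mul hdec1).mul hdec2
  have hdecT : Dec (fun (t : ℝ) (x : ℝ) => (deriv (deriv (u t)) x) ^ 2) := hdec2.pow 2 (by norm_num)
  have hdecA : Dec (fun (t : ℝ) (y : ℝ) => 1/2 * (deriv (deriv (deriv (u t))) y ^ 2) + -1 * (deriv (deriv (u t)) y * deriv (deriv (deriv (deriv (u t)))) y) + -1/4 * (deriv (u t) y ^ 4) + -5 * (u t y * deriv (u t) y ^ 2 * deriv (deriv (u t)) y) + -4 * (u t y ^ 2 * deriv (deriv (u t)) y ^ 2) + 5 * (u t y ^ 2 * deriv (u t) y * deriv (deriv (deriv (u t))) y) + 45/4 * (u t y ^ 4 * deriv (u t) y ^ 2) + -3/2 * (u t y ^ 5 * deriv (deriv (u t)) y) + -9/16 * (u t y ^ 8)) :=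
    (((((((((Dec.const_mul (1/2) (hdec3.pow 2 (by norm_num))).add (Dec.const_mul (-1) (hdec2.mul hdec4))).add (Dec.const_mul (-1/4) (hdec1.pow 4 (by norm_num)))).add (Dec.const_mul (-5) ((hdec0.mul (hdec1.pow 2 (by norm_num))).mul hdec2))).add (Dec.const_mul (-4) ((hdec0.pow 2 (by norm_num)).mul (hdec2.pow 2 (by norm_num))))).add (Dec.const_mul (5) (((hdec0.pow 2 (by norm_num)).mul hdec1).mul hdec3))).add (Dec.const_mul (45/4) ((hdec0.pow 4 (by norm_num)).mul (hdec1.pow 2 (by norm_num))))).add (Dec.const_mul (-3/2) ((hdec0.pow 5 (by norm_num)).mul hdec2))).add (Dec.const_mul (-9/16) (hdec0.pow 8 (by norm_num))))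
  have hdecB : Dec (fun (t : ℝ) (y : ℝ) => 1 * (deriv (deriv (u t)) y * deriv (deriv (deriv (u t))) y) + -5 * (u t y ^ 2 * deriv (u t) y * deriv (deriv (u t)) y)) :=
    ((Dec.const_mul (1) (hdec2.mul hdec3)).add (Dec.const_mul (-5) (((hdec0.pow 2 (by norm_num)).mul hdec1).mul hdec2)))
  have hdecC : Dec (fun (t : ℝ) (y : ℝ) => -1/2 * (deriv (deriv (u t)) y ^ 2)) :=
    (Dec.const_mul (-1/2) (hdec2.pow 2 (by norm_num)))
  have hcoE : ∀ s : ℝ, Continuous (fun x : ℝ => (1 / 2) * (deriv (deriv (u s)) x) ^ 2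
      - (5 / 2) * (u s x) ^ 2 * (deriv (u s) x) ^ 2 + (1 / 4) * (u s x) ^ 6) := fun s =>
    (((continuous_const.mul ((hco2 s).pow 2)).sub
      ((continuous_const.mul ((hco0 s).pow 2)).mul ((hco1 s).pow 2))).add
      (continuous_const.mul ((hco0 s).pow 6)))
  have hcoEt : ∀ s : ℝ, Continuous (fun x : ℝ => -1 * (deriv (deriv (u s)) x * deriv (deriv (deriv (deriv (deriv (u s))))) x) + -6 * (deriv (u s) x ^ 3 * deriv (deriv (u s)) x) + -18 * (u s x * deriv (u s) x * deriv (deriv (u s)) x ^ 2) + 5 * (u s x * deriv (u s) x ^ 2 * deriv (deriv (deriv (u s))) x) + -3 * (u s x ^ 2 * deriv (deriv (u s)) x * deriv (deriv (deriv (u s))) x) + 5 * (u s x ^ 2 * deriv (u s) x * deriv (deriv (deriv (deriv (u s)))) x) + 45 * (u s x ^ 3 * deriv (u s) x ^ 3) + 15 * (u s x ^ 4 * deriv (u s) x * deriv (deriv (u s)) x) + -3/2 * (u s x ^ 5 * deriv (deriv (deriv (u s))) x) + -9/2 * (u s x ^ 7 * deriv (u s) x)) := fun s =>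
    ((((((((((continuous_const.mul ((hco2 s).mul (hco5 s))).add (continuous_const.mul (((hco1 s).pow 3).mul (hco2 s)))).add (continuous_const.mul (((hco0 s).mul (hco1 s)).mul ((hco2 s).pow 2)))).add (continuous_const.mul (((hco0 s).mul ((hco1 s).pow 2)).mul (hco3 s)))).add (continuous_const.mul ((((hco0 s).pow 2).mul (hco2 s)).mul (hco3 s)))).add (continuous_const.mul ((((hco0 s).pow 2).mul (hco1 s)).mul (hco4 s)))).add (continuous_const.mul (((hco0 s).pow 3).mul ((hco1 s).pow 3)))).add (continuous_const.mul ((((hco0 s).pow 4).mul (hco1 s)).mul (hco2 s)))).add (continuous_const.mul (((hco0 s).pow 5).mul (hco3 s)))).add (continuous_const.mul (((hco0 s).pow 7).mul (hco1 s))))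
  have hcoR : Continuous (fun x : ℝ => (-(3 / 2) * (deriv (deriv (deriv (u t))) x) ^ 2 + 9 * (deriv (deriv (u t)) x) ^ 2 * (u t x) ^ 2 + 15 * (deriv (u t) x) ^ 2 * u t x * deriv (deriv (u t)) x + (9 / 16) * (u t x) ^ 8 + (1 / 4) * (deriv (u t) x) ^ 4 + (3 / 2) * deriv (deriv (u t)) x * (u t x) ^ 5 - (45 / 4) * (u t x) ^ 4 * (deriv (u t) x) ^ 2)) :=
    ((((((continuous_const.mul ((hco3 t).pow 2)).add
      ((continuous_const.mul ((hco2 t).pow 2)).mul ((hco0 t).pow 2))).add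
      (((continuous_const.mul ((hco1 t).pow 2)).mul (hco0 t)).mul (hco2 t))).add
      (continuous_const.mul ((hco0 t).pow 8))).add
      (continuous_const.mul ((hco1 t).pow 4))).add
      ((continuous_const.mul (hco2 t)).mul ((hco0 t).pow 5))).sub
      ((continuous_const.mul ((hco0 t).pow 4)).mul ((hco1 t).pow 2))
  have hcoS : Continuous (fun x : ℝ => (u t x) ^ 2 * deriv (u t) x * deriv (deriv (u t)) x) := (((hco0 t).pow 2).mul (hco1 t)).mul (hco2 t)
  have hcoT : Continuous (fun x : ℝ => (deriv (deriv (u t)) x) ^ 2) := (hco2 t).pow 2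
  have hcoA : Continuous (fun y : ℝ => 1/2 * (deriv (deriv (deriv (u t))) y ^ 2) + -1 * (deriv (deriv (u t)) y * deriv (deriv (deriv (deriv (u t)))) y) + -1/4 * (deriv (u t) y ^ 4) + -5 * (u t y * deriv (u t) y ^ 2 * deriv (deriv (u t)) y) + -4 * (u t y ^ 2 * deriv (deriv (u t)) y ^ 2) + 5 * (u t y ^ 2 * deriv (u t) y * deriv (deriv (deriv (u t))) y) + 45/4 * (u t y ^ 4 * deriv (u t) y ^ 2) + -3/2 * (u t y ^ 5 * deriv (deriv (u t)) y) + -9/16 * (u t y ^ 8)) :=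
    (((((((((continuous_const.mul ((hco3 t).pow 2)).add (continuous_const.mul ((hco2 t).mul (hco4 t)))).add (continuous_const.mul ((hco1 t).pow 4))).add (continuous_const.mul (((hco0 t).mul ((hco1 t).pow 2)).mul (hco2 t)))).add (continuous_const.mul (((hco0 t).pow 2).mul ((hco2 t).pow 2)))).add (continuous_const.mul ((((hco0 t).pow 2).mul (hco1 t)).mul (hco3 t)))).add (continuous_const.mul (((hco0 t).pow 4).mul ((hco1 t).pow 2)))).add (continuous_const.mul (((hco0 t).pow 5).mul (hco2 t)))).add (continuous_const.mul ((hco0 t).pow 8)))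
  have hcoB : Continuous (fun y : ℝ => 1 * (deriv (deriv (u t)) y * deriv (deriv (deriv (u t))) y) + -5 * (u t y ^ 2 * deriv (u t) y * deriv (deriv (u t)) y)) :=
    ((continuous_const.mul ((hco2 t).mul (hco3 t))).add (continuous_const.mul ((((hco0 t).pow 2).mul (hco1 t)).mul (hco2 t))))
  have hcoC : Continuous (fun y : ℝ => -1/2 * (deriv (deriv (u t)) y ^ 2)) :=
    (continuous_const.mul ((hco2 t).pow 2))
  -- ### differentiation under the integral sign ###
  obtain ⟨KE, hKE⟩ := hdecEt.bound2
  have main := hasDerivAt_integral_of_dominated_loc_of_deriv_le (μ := volume)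
      (F := fun (s : ℝ) (x : ℝ) => ((1 / 2) * (deriv (deriv (u s)) x) ^ 2 - (5 / 2) * (u s x) ^ 2 * (deriv (u s) x) ^ 2 + (1 / 4) * (u s x) ^ 6) * f x)
      (F' := fun (s : ℝ) (x : ℝ) => (-1 * (deriv (deriv (u s)) x * deriv (deriv (deriv (deriv (deriv (u s))))) x) + -6 * (deriv (u s) x ^ 3 * deriv (deriv (u s)) x) + -18 * (u s x * deriv (u s) x * deriv (deriv (u s)) x ^ 2) + 5 * (u s x * deriv (u s) x ^ 2 * deriv (deriv (deriv (u s))) x) + -3 * (u s x ^ 2 * deriv (deriv (u s)) x * deriv (deriv (deriv (u s))) x) + 5 * (u s x ^ 2 * deriv (u s) x * deriv (deriv (deriv (deriv (u s)))) x) + 45 * (u s x ^ 3 * deriv (u s) x ^ 3) + 15 * (u s x ^ 4 * deriv (u s) x * deriv (deriv (u s)) x) + -3/2 * (u s x ^ 5 * deriv (deriv (deriv (u s))) x) + -9/2 * (u s x ^ 7 * deriv (u s) x)) * f x)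
      (x₀ := t) (bound := fun x : ℝ => KE * Cf * (1 + x ^ 2)⁻¹)
      (Metric.ball_mem_nhds t one_pos)
      (Filter.Eventually.of_forall (fun s => ((hcoE s).mul hfc0).aestronglyMeasurable))
      (integrable_dec hdecE hCf0 t ((hcoE t).mul hfc0))
      (((hcoEt t).mul hfc0).aestronglyMeasurable)
      (Filter.Eventually.of_forall (fun x => fun s _ => by
        rw [Real.norm_eq_abs]
        calc |(-1 * (deriv (deriv (u s)) x * deriv (deriv (deriv (deriv (deriv (u s))))) x) + -6 * (deriv (u s) x ^ 3 * deriv (deriv (u s)) x) + -18 * (u s x * deriv (u s) x * deriv (deriv (u s)) x ^ 2) + 5 * (u s x * deriv (u s) x ^ 2 * deriv (deriv (deriv (u s))) x) + -3 * (u s x ^ 2 * deriv (deriv (u s)) x * deriv (deriv (deriv (u s))) x) + 5 * (u s x ^ 2 * deriv (u s) x * deriv (deriv (deriv (deriv (u s)))) x) + 45 * (u s x ^ 3 * deriv (u s) x ^ 3) + 15 * (u s x ^ 4 * deriv (u s) x * deriv (deriv (u s)) x) + -3/2 * (u s x ^ 5 * deriv (deriv (deriv (u s))) x) + -9/2 *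 (u s x ^ 7 * deriv (u s) x)) * f x| ≤ (KE * (1 + x ^ 2)⁻¹) * Cf :=
              mkdv_abs_mul_le (hKE s x) (hCf0 x)
          _ = KE * Cf * (1 + x ^ 2)⁻¹ := by ring))
      (integrable_inv_one_add_sq.const_mul (KE * Cf))
      (Filter.Eventually.of_forall (fun x => fun s _ => hFdiff s x))
  have I1 : Integrable (fun x : ℝ => (-1 * (deriv (deriv (u t)) x * deriv (deriv (deriv (deriv (deriv (u t))))) x) + -6 * (deriv (u t) x ^ 3 * deriv (deriv (u t)) x) + -18 * (u t x * deriv (u t) x * deriv (deriv (u t)) x ^ 2) + 5 * (u t x * deriv (u t) x ^ 2 * deriv (deriv (deriv (u t))) x) + -3 * (u t x ^ 2 * deriv (deriv (u t)) x * deriv (deriv (deriv (u t))) x) + 5 * (u t x ^ 2 * deriv (u t) x * deriv (deriv (deriv (deriv (u t)))) x) + 45 * (u t x ^ 3 * deriv (u t) x ^ 3) + 15 * (u t x ^ 4 * deriv (u t) x * deriv (deriv (u t)) x) + -3/2 * (u t x ^ 5 * deriv (deriv (deriv (u t))) x) + -9/2 * (u t x ^ 7 * deriv (u t) x)) * f x)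 := main.1
  have hmain : HasDerivAt (fun s : ℝ => ∫ x : ℝ, ((1 / 2) * (deriv (deriv (u s)) x) ^ 2 - (5 / 2) * (u s x) ^ 2 * (deriv (u s) x) ^ 2 + (1 / 4) * (u s x) ^ 6) * f x)
      (∫ x : ℝ, (-1 * (deriv (deriv (u t)) x * deriv (deriv (deriv (deriv (deriv (u t))))) x) + -6 * (deriv (u t) x ^ 3 * deriv (deriv (u t)) x) + -18 * (u t x * deriv (u t) x * deriv (deriv (u t)) x ^ 2) + 5 * (u t x * deriv (u t) x ^ 2 * deriv (deriv (deriv (u t))) x) + -3 * (u t x ^ 2 * deriv (deriv (u t)) x * deriv (deriv (deriv (u t))) x) + 5 * (u t x ^ 2 * deriv (u t) x * deriv (deriv (deriv (deriv (u t)))) x) + 45 * (u t x ^ 3 * deriv (u t) x ^ 3) + 15 * (u t x ^ 4 * deriv (u t) x * deriv (deriv (u t)) x) + -3/2 * (u t x ^ 5 * deriv (deriv (deriv (u t))) x) + -9/2 * (u t x ^ 7 * deriv (u t) x)) * f x) t := main.2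
  -- ### the flux function and its derivative ###
  have hder : ∀ x : ℝ, HasDerivAt (fun y : ℝ => (1/2 * (deriv (deriv (deriv (u t))) y ^ 2) + -1 * (deriv (deriv (u t)) y * deriv (deriv (deriv (deriv (u t)))) y) + -1/4 * (deriv (u t) y ^ 4) + -5 * (u t y * deriv (u t) y ^ 2 * deriv (deriv (u t)) y) + -4 * (u t y ^ 2 * deriv (deriv (u t)) y ^ 2) + 5 * (u t y ^ 2 * deriv (u t) y * deriv (deriv (deriv (u t))) y) + 45/4 * (u t y ^ 4 * deriv (u t) y ^ 2) + -3/2 * (u t y ^ 5 * deriv (deriv (u t)) y) + -9/16 * (u t y ^ 8)) * f y + (1 * (deriv (deriv (u t)) y * deriv (deriv (deriv (u t))) y) + -5 * (u t y ^ 2 * deriv (u t) y * deriv (deriv (u t)) y)) * deriv f y + (-1/2 * (deriv (deriv (u t)) y ^ 2)) * deriv (deriv f) y) ((-1 * (deriv (deriv (u t)) x * deriv (deriv (deriv (deriv (deriv (u t))))) x) + -6 * (deriv (u t) x ^ 3 * deriv (deriv (u t)) x) + -18 * (u t x * deriv (u t) x * deriv (deriv (u t)) x ^ 2) + 5 * (u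 t x * deriv (u t) x ^ 2 * deriv (deriv (deriv (u t))) x) + -3 * (u t x ^ 2 * deriv (deriv (u t)) x * deriv (deriv (deriv (u t))) x) + 5 * (u t x ^ 2 * deriv (u t) x * deriv (deriv (deriv (deriv (u t)))) x) + 45 * (u t x ^ 3 * deriv (u t) x ^ 3) + 15 * (u t x ^ 4 * deriv (u t) x * deriv (deriv (u t)) x) + -3/2 * (u t x ^ 5 * deriv (deriv (deriv (u t))) x) + -9/2 * (u t x ^ 7 * deriv (u t) x)) * f x - (-(3 / 2) * (deriv (deriv (deriv (u t))) x) ^ 2 + 9 * (deriv (deriv (u t)) x) ^ 2 * (u t x) ^ 2 + 15 * (deriv (u t) x) ^ 2 * u t x * deriv (deriv (u t)) x + (9 / 16) * (u t x) ^ 8 + (1 / 4) * (deriv (u t) x) ^ 4 + (3 / 2) * deriv (deriv (u t)) x * (u t x) ^ 5 - (45 / 4) * (u t x) ^ 4 * (deriv (u t) x) ^ 2) * deriv f x - 5 * ((u t x) ^ 2 * deriv (u t) x * deriv (deriv (u t)) x * deriv (deriv f) x) - (1 / 2) * ((deriv (deriv (u t)) x) ^ 2 * deriv (deriv (deriv f))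 x)) x := by
    intro x
    have h := ((((((((((((HasDerivAt.const_mul ((1/2 : ℝ)) ((hx4 t x).fun_pow 2)).add (HasDerivAt.const_mul ((-1 : ℝ)) ((hx3 t x).mul (hx5 t x)))).add (HasDerivAt.const_mul ((-1/4 : ℝ)) ((hx2 t x).fun_pow 4))).add (HasDerivAt.const_mul ((-5 : ℝ)) (((hx1 t x).mul ((hx2 t x).fun_pow 2)).mul (hx3 t x)))).add (HasDerivAt.const_mul ((-4 : ℝ)) (((hx1 t x).fun_pow 2).mul ((hx3 t x).fun_pow 2)))).add (HasDerivAt.const_mul ((5 : ℝ)) ((((hx1 t x).fun_pow 2).mul (hx2 t x)).mul (hx4 t x)))).add (HasDerivAt.const_mul ((45/4 : ℝ)) (((hx1 t x).fun_pow 4).mul ((hx2 t x).fun_pow 2)))).add (HasDerivAt.const_mul ((-3/2 : ℝ)) (((hx1 t x).fun_pow 5).mul (hx3 t x)))).add (HasDerivAt.const_mul ((-9/16 : ℝ)) ((hx1 t x).fun_pow 8)))).mul (hDf0 x)).add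
        ((((HasDerivAt.const_mul ((1 : ℝ)) ((hx3 t x).mul (hx4 t x))).add (HasDerivAt.const_mul ((-5 : ℝ)) ((((hx1 t x).fun_pow 2).mul (hx2 t x)).mul (hx3 t x))))).mul (hDf1 x))).add
        (((HasDerivAt.const_mul ((-1/2 : ℝ)) ((hx3 t x).fun_pow 2))).mul (hDf2 x))
    refine h.congr_deriv ?_
    simp only [Pi.mul_apply, Pi.add_apply, Pi.neg_apply, Pi.sub_apply]
    push_cast
    ring
  -- ### integrability ###
  have I2 : Integrable (fun x : ℝ => (-(3 / 2) * (deriv (deriv (deriv (u t))) x) ^ 2 + 9 * (deriv (deriv (u t)) x) ^ 2 * (u t x) ^ 2 + 15 * (deriv (u t) x) ^ 2 * u t x * deriv (deriv (u t)) x + (9 / 16) * (u t x) ^ 8 + (1 / 4) * (deriv (u t) x) ^ 4 + (3 / 2) * deriv (deriv (u t)) x * (u t x) ^ 5 - (45 / 4) * (u t x) ^ 4 * (deriv (u t) x) ^ 2) * deriv f x) := integrable_dec hdecR hCf1 t (hcoR.mul hfc1)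
  have I3 : Integrable (fun x : ℝ => (u t x) ^ 2 * deriv (u t) x * deriv (deriv (u t)) x * deriv (deriv f) x) := integrable_dec hdecS hCf2 t (hcoS.mul hfc2)
  have I4 : Integrable (fun x : ℝ => (deriv (deriv (u t)) x) ^ 2 * deriv (deriv (deriv f)) x) := integrable_dec hdecT hCf3 t (hcoT.mul hfc3)
  have I3' : Integrable (fun x : ℝ => 5 * ((u t x) ^ 2 * deriv (u t) x * deriv (deriv (u t)) x * deriv (deriv f) x)) := I3.const_mul 5
  have I4' : Integrable (fun x : ℝ => (1 / 2) * ((deriv (deriv (u t)) x) ^ 2 * deriv (deriv (deriv f)) x)) := I4.const_mul (1 / 2)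
  have IA : Integrable (fun x : ℝ => (-1 * (deriv (deriv (u t)) x * deriv (deriv (deriv (deriv (deriv (u t))))) x) + -6 * (deriv (u t) x ^ 3 * deriv (deriv (u t)) x) + -18 * (u t x * deriv (u t) x * deriv (deriv (u t)) x ^ 2) + 5 * (u t x * deriv (u t) x ^ 2 * deriv (deriv (deriv (u t))) x) + -3 * (u t x ^ 2 * deriv (deriv (u t)) x * deriv (deriv (deriv (u t))) x) + 5 * (u t x ^ 2 * deriv (u t) x * deriv (deriv (deriv (deriv (u t)))) x) + 45 * (u t x ^ 3 * deriv (u t) x ^ 3) + 15 * (u t x ^ 4 * deriv (u t) x * deriv (deriv (u t)) x) + -3/2 * (u t x ^ 5 * deriv (deriv (deriv (u t))) x) + -9/2 * (u t x ^ 7 * deriv (u t) x)) * f x - (-(3 / 2) * (deriv (deriv (deriv (u t))) x) ^ 2 + 9 * (deriv (deriv (u t)) x) ^ 2 * (u t x) ^ 2 + 15 * (deriv (u t) x) ^ 2 * u t x * deriv (deriv (u t)) x + (9 / 16) * (u t x) ^ 8 + (1 / 4) * (deriv (u t) x) ^ 4 + (3 / 2) * deriv (deriv (u t)) x * (u t x)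 ^ 5 - (45 / 4) * (u t x) ^ 4 * (deriv (u t) x) ^ 2) * deriv f x) := I1.sub I2
  have IB : Integrable (fun x : ℝ => (-1 * (deriv (deriv (u t)) x * deriv (deriv (deriv (deriv (deriv (u t))))) x) + -6 * (deriv (u t) x ^ 3 * deriv (deriv (u t)) x) + -18 * (u t x * deriv (u t) x * deriv (deriv (u t)) x ^ 2) + 5 * (u t x * deriv (u t) x ^ 2 * deriv (deriv (deriv (u t))) x) + -3 * (u t x ^ 2 * deriv (deriv (u t)) x * deriv (deriv (deriv (u t))) x) + 5 * (u t x ^ 2 * deriv (u t) x * deriv (deriv (deriv (deriv (u t)))) x) + 45 * (u t x ^ 3 * deriv (u t) x ^ 3) + 15 * (u t x ^ 4 * deriv (u t) x * deriv (deriv (u t)) x) + -3/2 * (u t x ^ 5 * deriv (deriv (deriv (u t))) x) + -9/2 * (u t x ^ 7 * deriv (u t) x)) * f x - (-(3 / 2) * (deriv (deriv (deriv (u t))) x) ^ 2 + 9 * (deriv (deriv (u t)) x) ^ 2 * (u t x) ^ 2 + 15 * (deriv (u t) x) ^ 2 * u t x * deriv (deriv (u t)) x + (9 / 16) * (u t x)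 ^ 8 + (1 / 4) * (deriv (u t) x) ^ 4 + (3 / 2) * deriv (deriv (u t)) x * (u t x) ^ 5 - (45 / 4) * (u t x) ^ 4 * (deriv (u t) x) ^ 2) * deriv f x - 5 * ((u t x) ^ 2 * deriv (u t) x * deriv (deriv (u t)) x * deriv (deriv f) x)) := IA.sub I3'
  have IG : Integrable (fun x : ℝ => (-1 * (deriv (deriv (u t)) x * deriv (deriv (deriv (deriv (deriv (u t))))) x) + -6 * (deriv (u t) x ^ 3 * deriv (deriv (u t)) x) + -18 * (u t x * deriv (u t) x * deriv (deriv (u t)) x ^ 2) + 5 * (u t x * deriv (u t) x ^ 2 * deriv (deriv (deriv (u t))) x) + -3 * (u t x ^ 2 * deriv (deriv (u t)) x * deriv (deriv (deriv (u t))) x) + 5 * (u t x ^ 2 * deriv (u t) x * deriv (deriv (deriv (deriv (u t)))) x) + 45 * (u t x ^ 3 * deriv (u t) x ^ 3) + 15 * (u t x ^ 4 * deriv (u t) x * deriv (deriv (u t)) x) + -3/2 * (u t x ^ 5 * deriv (deriv (deriv (u t))) x) + -9/2 * (u t x ^ 7 * deriv (u t) x)) * f x - (-(3 / 2) * (deriv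 (deriv (deriv (u t))) x) ^ 2 + 9 * (deriv (deriv (u t)) x) ^ 2 * (u t x) ^ 2 + 15 * (deriv (u t) x) ^ 2 * u t x * deriv (deriv (u t)) x + (9 / 16) * (u t x) ^ 8 + (1 / 4) * (deriv (u t) x) ^ 4 + (3 / 2) * deriv (deriv (u t)) x * (u t x) ^ 5 - (45 / 4) * (u t x) ^ 4 * (deriv (u t) x) ^ 2) * deriv f x - 5 * ((u t x) ^ 2 * deriv (u t) x * deriv (deriv (u t)) x * deriv (deriv f) x) - (1 / 2) * ((deriv (deriv (u t)) x) ^ 2 * deriv (deriv (deriv f)) x)) := IB.sub I4'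
  -- ### decay of the flux function ###
  obtain ⟨KA, hKA⟩ := hdecA.bound2
  obtain ⟨KB, hKB⟩ := hdecB.bound2
  obtain ⟨KC, hKC⟩ := hdecC.bound2
  have hHb : ∀ x : ℝ, |(1/2 * (deriv (deriv (deriv (u t))) x ^ 2) + -1 * (deriv (deriv (u t)) x * deriv (deriv (deriv (deriv (u t)))) x) + -1/4 * (deriv (u t) x ^ 4) + -5 * (u t x * deriv (u t) x ^ 2 * deriv (deriv (u t)) x) + -4 * (u t x ^ 2 * deriv (deriv (u t)) x ^ 2) + 5 * (u t x ^ 2 * deriv (u t) x * deriv (deriv (deriv (u t))) x) + 45/4 * (u t x ^ 4 * deriv (u t) x ^ 2) + -3/2 * (u t x ^ 5 * deriv (deriv (u t)) x) + -9/16 * (u t x ^ 8)) * f x + (1 * (deriv (deriv (u t)) x * deriv (deriv (deriv (u t))) x) + -5 * (u t x ^ 2 * deriv (u t) x * deriv (deriv (u t)) x)) * deriv f x + (-1/2 * (deriv (deriv (u t)) x ^ 2)) * deriv (deriv f) x| ≤ (KA + KB + KC) * Cf * (1 + x ^ 2)⁻¹ := fun x => by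
    have h1 : |(1/2 * (deriv (deriv (deriv (u t))) x ^ 2) + -1 * (deriv (deriv (u t)) x * deriv (deriv (deriv (deriv (u t)))) x) + -1/4 * (deriv (u t) x ^ 4) + -5 * (u t x * deriv (u t) x ^ 2 * deriv (deriv (u t)) x) + -4 * (u t x ^ 2 * deriv (deriv (u t)) x ^ 2) + 5 * (u t x ^ 2 * deriv (u t) x * deriv (deriv (deriv (u t))) x) + 45/4 * (u t x ^ 4 * deriv (u t) x ^ 2) + -3/2 * (u t x ^ 5 * deriv (deriv (u t)) x) + -9/16 * (u t x ^ 8)) * f x| ≤ (KA * (1 + x ^ 2)⁻¹) * Cf := mkdv_abs_mul_le (hKA t x) (hCf0 x)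
    have h2 : |(1 * (deriv (deriv (u t)) x * deriv (deriv (deriv (u t))) x) + -5 * (u t x ^ 2 * deriv (u t) x * deriv (deriv (u t)) x)) * deriv f x| ≤ (KB * (1 + x ^ 2)⁻¹) * Cf :=
      mkdv_abs_mul_le (hKB t x) (hCf1 x)
    have h3 : |(-1/2 * (deriv (deriv (u t)) x ^ 2)) * deriv (deriv f) x| ≤ (KC * (1 + x ^ 2)⁻¹) * Cf :=
      mkdv_abs_mul_le (hKC t x) (hCf2 x)
    have h4 := abs_add_le ((1/2 * (deriv (deriv (deriv (u t))) x ^ 2) + -1 * (deriv (deriv (u t)) x * deriv (deriv (deriv (deriv (u t)))) x) + -1/4 * (deriv (u t) x ^ 4) + -5 * (u t x * deriv (u t) x ^ 2 * deriv (deriv (u t)) x) + -4 * (u t x ^ 2 * deriv (deriv (u t)) x ^ 2) + 5 * (u t x ^ 2 * deriv (u t) x * deriv (deriv (deriv (u t))) x) + 45/4 * (u t x ^ 4 * deriv (u t) x ^ 2) + -3/2 * (u t x ^ 5 * deriv (deriv (u t)) x) + -9/16 * (u t x ^ 8)) * f x + (1 * (deriv (deriv (u t)) x * deriv (deriv (deriv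 (u t))) x) + -5 * (u t x ^ 2 * deriv (u t) x * deriv (deriv (u t)) x)) * deriv f x) ((-1/2 * (deriv (deriv (u t)) x ^ 2)) * deriv (deriv f) x)
    have h5 := abs_add_le ((1/2 * (deriv (deriv (deriv (u t))) x ^ 2) + -1 * (deriv (deriv (u t)) x * deriv (deriv (deriv (deriv (u t)))) x) + -1/4 * (deriv (u t) x ^ 4) + -5 * (u t x * deriv (u t) x ^ 2 * deriv (deriv (u t)) x) + -4 * (u t x ^ 2 * deriv (deriv (u t)) x ^ 2) + 5 * (u t x ^ 2 * deriv (u t) x * deriv (deriv (deriv (u t))) x) + 45/4 * (u t x ^ 4 * deriv (u t) x ^ 2) + -3/2 * (u t x ^ 5 * deriv (deriv (u t)) x) + -9/16 * (u t x ^ 8)) * f x) ((1 * (deriv (deriv (u t)) x * deriv (deriv (deriv (u t))) x) + -5 * (u t x ^ 2 * deriv (u t) x * deriv (deriv (u t)) x)) * deriv f x)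
    have h6 : (KA * (1 + x ^ 2)⁻¹) * Cf + (KB * (1 + x ^ 2)⁻¹) * Cf
        + (KC * (1 + x ^ 2)⁻¹) * Cf = (KA + KB + KC) * Cf * (1 + x ^ 2)⁻¹ := by ring
    linarith
  have htend : Tendsto (fun x : ℝ => (1/2 * (deriv (deriv (deriv (u t))) x ^ 2) + -1 * (deriv (deriv (u t)) x * deriv (deriv (deriv (deriv (u t)))) x) + -1/4 * (deriv (u t) x ^ 4) + -5 * (u t x * deriv (u t) x ^ 2 * deriv (deriv (u t)) x) + -4 * (u t x ^ 2 * deriv (deriv (u t)) x ^ 2) + 5 * (u t x ^ 2 * deriv (u t) x * deriv (deriv (deriv (u t))) x) + 45/4 * (u t x ^ 4 * deriv (u t) x ^ 2) + -3/2 * (u t x ^ 5 * deriv (deriv (u t)) x) + -9/16 * (u t x ^ 8)) * f x + (1 * (deriv (deriv (u t)) x * deriv (deriv (deriv (u t))) x) + -5 * (u t x ^ 2 * deriv (u t) x * deriv (deriv (u t)) x)) * deriv f x + (-1/2 * (deriv (deriv (u t)) x ^ 2)) * deriv (deriv f) x) atTop (nhds 0)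
      ∧ Tendsto (fun x : ℝ => (1/2 * (deriv (deriv (deriv (u t))) x ^ 2) + -1 * (deriv (deriv (u t)) x * deriv (deriv (deriv (deriv (u t)))) x) + -1/4 * (deriv (u t) x ^ 4) + -5 * (u t x * deriv (u t) x ^ 2 * deriv (deriv (u t)) x) + -4 * (u t x ^ 2 * deriv (deriv (u t)) x ^ 2) + 5 * (u t x ^ 2 * deriv (u t) x * deriv (deriv (deriv (u t))) x) + 45/4 * (u t x ^ 4 * deriv (u t) x ^ 2) + -3/2 * (u t x ^ 5 * deriv (deriv (u t)) x) + -9/16 * (u t x ^ 8)) * f x + (1 * (deriv (deriv (u t)) x * deriv (deriv (deriv (u t))) x) + -5 * (u t x ^ 2 * deriv (u t) x * deriv (deriv (u t)) x)) * deriv f x + (-1/2 * (deriv (deriv (u t)) x ^ 2)) * deriv (deriv f) x) atBot (nhds 0) :=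
    tendsto_zero_of_bound ((KA + KB + KC) * Cf) hHb
  have hzero : (∫ x : ℝ, ((-1 * (deriv (deriv (u t)) x * deriv (deriv (deriv (deriv (deriv (u t))))) x) + -6 * (deriv (u t) x ^ 3 * deriv (deriv (u t)) x) + -18 * (u t x * deriv (u t) x * deriv (deriv (u t)) x ^ 2) + 5 * (u t x * deriv (u t) x ^ 2 * deriv (deriv (deriv (u t))) x) + -3 * (u t x ^ 2 * deriv (deriv (u t)) x * deriv (deriv (deriv (u t))) x) + 5 * (u t x ^ 2 * deriv (u t) x * deriv (deriv (deriv (deriv (u t)))) x) + 45 * (u t x ^ 3 * deriv (u t) x ^ 3) + 15 * (u t x ^ 4 * deriv (u t) x * deriv (deriv (u t)) x) + -3/2 * (u t x ^ 5 * deriv (deriv (deriv (u t))) x) + -9/2 * (u t x ^ 7 * deriv (u t) x)) * f x - (-(3 / 2) * (deriv (deriv (deriv (u t))) x) ^ 2 + 9 * (deriv (deriv (u t)) x) ^ 2 * (u t x) ^ 2 + 15 * (deriv (u t) x) ^ 2 * u t x * deriv (deriv (u t)) x + (9 / 16) * (u t x) ^ 8 + (1 / 4) * (deriv (u t) x) ^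 4 + (3 / 2) * deriv (deriv (u t)) x * (u t x) ^ 5 - (45 / 4) * (u t x) ^ 4 * (deriv (u t) x) ^ 2) * deriv f x - 5 * ((u t x) ^ 2 * deriv (u t) x * deriv (deriv (u t)) x * deriv (deriv f) x) - (1 / 2) * ((deriv (deriv (u t)) x) ^ 2 * deriv (deriv (deriv f)) x))) = 0 :=
    mkdv_integral_deriv_eq_zero hder IG htend.1 htend.2
  -- ### splitting the integral ###
  have e1 : (∫ x : ℝ, ((-1 * (deriv (deriv (u t)) x * deriv (deriv (deriv (deriv (deriv (u t))))) x) + -6 * (deriv (u t) x ^ 3 * deriv (deriv (u t)) x) + -18 * (u t x * deriv (u t) x * deriv (deriv (u t)) x ^ 2) + 5 * (u t x * deriv (u t) x ^ 2 * deriv (deriv (deriv (u t))) x) + -3 * (u t x ^ 2 * deriv (deriv (u t)) x * deriv (deriv (deriv (u t))) x) + 5 * (u t x ^ 2 * deriv (u t) x * deriv (deriv (deriv (deriv (u t)))) x) + 45 * (u t x ^ 3 * deriv (u t) x ^ 3) + 15 * (u t x ^ 4 * deriv (u t) x * deriv (deriv (u t)) x) + -3/2 * (u t x ^ 5 * deriv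 (deriv (deriv (u t))) x) + -9/2 * (u t x ^ 7 * deriv (u t) x)) * f x - (-(3 / 2) * (deriv (deriv (deriv (u t))) x) ^ 2 + 9 * (deriv (deriv (u t)) x) ^ 2 * (u t x) ^ 2 + 15 * (deriv (u t) x) ^ 2 * u t x * deriv (deriv (u t)) x + (9 / 16) * (u t x) ^ 8 + (1 / 4) * (deriv (u t) x) ^ 4 + (3 / 2) * deriv (deriv (u t)) x * (u t x) ^ 5 - (45 / 4) * (u t x) ^ 4 * (deriv (u t) x) ^ 2) * deriv f x - 5 * ((u t x) ^ 2 * deriv (u t) x * deriv (deriv (u t)) x * deriv (deriv f) x) - (1 / 2) * ((deriv (deriv (u t)) x) ^ 2 * deriv (deriv (deriv f)) x)))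
      = (∫ x : ℝ, ((-1 * (deriv (deriv (u t)) x * deriv (deriv (deriv (deriv (deriv (u t))))) x) + -6 * (deriv (u t) x ^ 3 * deriv (deriv (u t)) x) + -18 * (u t x * deriv (u t) x * deriv (deriv (u t)) x ^ 2) + 5 * (u t x * deriv (u t) x ^ 2 * deriv (deriv (deriv (u t))) x) + -3 * (u t x ^ 2 * deriv (deriv (u t)) x * deriv (deriv (deriv (u t))) x) + 5 * (u t x ^ 2 * deriv (u t) x * deriv (deriv (deriv (deriv (u t)))) x) + 45 * (u t x ^ 3 * deriv (u t) x ^ 3) + 15 * (u t x ^ 4 * deriv (u t) x * deriv (deriv (u t)) x) + -3/2 * (u t x ^ 5 * deriv (deriv (deriv (u t))) x) + -9/2 * (u t x ^ 7 * deriv (u t) x)) * f x - (-(3 / 2) * (deriv (deriv (deriv (u t))) x) ^ 2 + 9 * (deriv (deriv (u t)) x) ^ 2 * (u t x) ^ 2 + 15 * (deriv (u t) x) ^ 2 * u t x * deriv (deriv (u t)) x + (9 / 16) * (u t x) ^ 8 + (1 / 4) * (deriv (u t) x) ^ 4 + (3 / 2) * deriv (deriv (u t)) x * (u t x) ^ 5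 - (45 / 4) * (u t x) ^ 4 * (deriv (u t) x) ^ 2) * deriv f x - 5 * ((u t x) ^ 2 * deriv (u t) x * deriv (deriv (u t)) x * deriv (deriv f) x)))
        - ∫ x : ℝ, (1 / 2) * ((deriv (deriv (u t)) x) ^ 2 * deriv (deriv (deriv f)) x) := integral_sub IB I4'
  have e2 : (∫ x : ℝ, ((-1 * (deriv (deriv (u t)) x * deriv (deriv (deriv (deriv (deriv (u t))))) x) + -6 * (deriv (u t) x ^ 3 * deriv (deriv (u t)) x) + -18 * (u t x * deriv (u t) x * deriv (deriv (u t)) x ^ 2) + 5 * (u t x * deriv (u t) x ^ 2 * deriv (deriv (deriv (u t))) x) + -3 * (u t x ^ 2 * deriv (deriv (u t)) x * deriv (deriv (deriv (u t))) x) + 5 * (u t x ^ 2 * deriv (u t) x * deriv (deriv (deriv (deriv (u t)))) x) + 45 * (u t x ^ 3 * deriv (u t) x ^ 3) + 15 * (u t x ^ 4 * deriv (u t) x * deriv (deriv (u t)) x) + -3/2 * (u t x ^ 5 * deriv (deriv (deriv (u t))) x) + -9/2 * (u t x ^ 7 * deriv (u t) x)) * f x - (-(3 / 2) * (deriv (deriv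 (deriv (u t))) x) ^ 2 + 9 * (deriv (deriv (u t)) x) ^ 2 * (u t x) ^ 2 + 15 * (deriv (u t) x) ^ 2 * u t x * deriv (deriv (u t)) x + (9 / 16) * (u t x) ^ 8 + (1 / 4) * (deriv (u t) x) ^ 4 + (3 / 2) * deriv (deriv (u t)) x * (u t x) ^ 5 - (45 / 4) * (u t x) ^ 4 * (deriv (u t) x) ^ 2) * deriv f x - 5 * ((u t x) ^ 2 * deriv (u t) x * deriv (deriv (u t)) x * deriv (deriv f) x)))
      = (∫ x : ℝ, ((-1 * (deriv (deriv (u t)) x * deriv (deriv (deriv (deriv (deriv (u t))))) x) + -6 * (deriv (u t) x ^ 3 * deriv (deriv (u t)) x) + -18 * (u t x * deriv (u t) x * deriv (deriv (u t)) x ^ 2) + 5 * (u t x * deriv (u t) x ^ 2 * deriv (deriv (deriv (u t))) x) + -3 * (u t x ^ 2 * deriv (deriv (u t)) x * deriv (deriv (deriv (u t))) x) + 5 * (u t x ^ 2 * deriv (u t) x * deriv (deriv (deriv (deriv (u t)))) x) + 45 * (u t x ^ 3 * deriv (u t) x ^ 3) + 15 * (u t x ^ 4 * deriv (u t) x * deriv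 (deriv (u t)) x) + -3/2 * (u t x ^ 5 * deriv (deriv (deriv (u t))) x) + -9/2 * (u t x ^ 7 * deriv (u t) x)) * f x - (-(3 / 2) * (deriv (deriv (deriv (u t))) x) ^ 2 + 9 * (deriv (deriv (u t)) x) ^ 2 * (u t x) ^ 2 + 15 * (deriv (u t) x) ^ 2 * u t x * deriv (deriv (u t)) x + (9 / 16) * (u t x) ^ 8 + (1 / 4) * (deriv (u t) x) ^ 4 + (3 / 2) * deriv (deriv (u t)) x * (u t x) ^ 5 - (45 / 4) * (u t x) ^ 4 * (deriv (u t) x) ^ 2) * deriv f x)) - ∫ x : ℝ, 5 * ((u t x) ^ 2 * deriv (u t) x * deriv (deriv (u t)) x * deriv (deriv f) x) := integral_sub IA I3'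
  have e3 : (∫ x : ℝ, ((-1 * (deriv (deriv (u t)) x * deriv (deriv (deriv (deriv (deriv (u t))))) x) + -6 * (deriv (u t) x ^ 3 * deriv (deriv (u t)) x) + -18 * (u t x * deriv (u t) x * deriv (deriv (u t)) x ^ 2) + 5 * (u t x * deriv (u t) x ^ 2 * deriv (deriv (deriv (u t))) x) + -3 * (u t x ^ 2 * deriv (deriv (u t)) x * deriv (deriv (deriv (u t))) x) + 5 * (u t x ^ 2 * deriv (u t) x * deriv (deriv (deriv (deriv (u t)))) x) + 45 * (u t x ^ 3 * deriv (u t) x ^ 3) + 15 * (u t x ^ 4 * deriv (u t) x * deriv (deriv (u t)) x) + -3/2 * (u t x ^ 5 * deriv (deriv (deriv (u t))) x) + -9/2 * (u t x ^ 7 * deriv (u t) x)) * f x - (-(3 / 2) * (deriv (deriv (deriv (u t))) x) ^ 2 + 9 * (deriv (deriv (u t)) x) ^ 2 * (u t x) ^ 2 + 15 * (deriv (u t) x) ^ 2 * u t x * deriv (deriv (u t)) x + (9 / 16) * (u t x) ^ 8 + (1 / 4) * (deriv (u t) x) ^ 4 + (3 / 2) * deriv (deriv (u t)) x * (u t x)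 ^ 5 - (45 / 4) * (u t x) ^ 4 * (deriv (u t) x) ^ 2) * deriv f x))
      = (∫ x : ℝ, (-1 * (deriv (deriv (u t)) x * deriv (deriv (deriv (deriv (deriv (u t))))) x) + -6 * (deriv (u t) x ^ 3 * deriv (deriv (u t)) x) + -18 * (u t x * deriv (u t) x * deriv (deriv (u t)) x ^ 2) + 5 * (u t x * deriv (u t) x ^ 2 * deriv (deriv (deriv (u t))) x) + -3 * (u t x ^ 2 * deriv (deriv (u t)) x * deriv (deriv (deriv (u t))) x) + 5 * (u t x ^ 2 * deriv (u t) x * deriv (deriv (deriv (deriv (u t)))) x) + 45 * (u t x ^ 3 * deriv (u t) x ^ 3) + 15 * (u t x ^ 4 * deriv (u t) x * deriv (deriv (u t)) x) + -3/2 * (u t x ^ 5 * deriv (deriv (deriv (u t))) x) + -9/2 * (u t x ^ 7 * deriv (u t) x)) * f x) - ∫ x : ℝ, (-(3 / 2) * (deriv (deriv (deriv (u t))) x) ^ 2 + 9 * (deriv (deriv (u t)) x) ^ 2 * (u t x) ^ 2 + 15 * (deriv (u t) x) ^ 2 * u t x * deriv (deriv (u t)) x + (9 / 16) * (u t x) ^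 8 + (1 / 4) * (deriv (u t) x) ^ 4 + (3 / 2) * deriv (deriv (u t)) x * (u t x) ^ 5 - (45 / 4) * (u t x) ^ 4 * (deriv (u t) x) ^ 2) * deriv f x := integral_sub I1 I2
  have e4 : (∫ x : ℝ, 5 * ((u t x) ^ 2 * deriv (u t) x * deriv (deriv (u t)) x * deriv (deriv f) x)) = 5 * ∫ x : ℝ, (u t x) ^ 2 * deriv (u t) x * deriv (deriv (u t)) x * deriv (deriv f) x := integral_const_mul 5 _
  have e5 : (∫ x : ℝ, (1 / 2) * ((deriv (deriv (u t)) x) ^ 2 * deriv (deriv (deriv f)) x)) = (1 / 2) * ∫ x : ℝ, (deriv (deriv (u t)) x) ^ 2 * deriv (deriv (deriv f)) x :=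
    integral_const_mul (1 / 2) _
  have hsplit : (∫ x : ℝ, (-1 * (deriv (deriv (u t)) x * deriv (deriv (deriv (deriv (deriv (u t))))) x) + -6 * (deriv (u t) x ^ 3 * deriv (deriv (u t)) x) + -18 * (u t x * deriv (u t) x * deriv (deriv (u t)) x ^ 2) + 5 * (u t x * deriv (u t) x ^ 2 * deriv (deriv (deriv (u t))) x) + -3 * (u t x ^ 2 * deriv (deriv (u t)) x * deriv (deriv (deriv (u t))) x) + 5 * (u t x ^ 2 * deriv (u t) x * deriv (deriv (deriv (deriv (u t)))) x) + 45 * (u t x ^ 3 * deriv (u t) x ^ 3) + 15 * (u t x ^ 4 * deriv (u t) x * deriv (deriv (u t)) x) + -3/2 * (u t x ^ 5 * deriv (deriv (deriv (u t))) x) + -9/2 * (u t x ^ 7 * deriv (u t) x)) * f x)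
      = (∫ x : ℝ, (-(3 / 2) * (deriv (deriv (deriv (u t))) x) ^ 2 + 9 * (deriv (deriv (u t)) x) ^ 2 * (u t x) ^ 2 + 15 * (deriv (u t) x) ^ 2 * u t x * deriv (deriv (u t)) x + (9 / 16) * (u t x) ^ 8 + (1 / 4) * (deriv (u t) x) ^ 4 + (3 / 2) * deriv (deriv (u t)) x * (u t x) ^ 5 - (45 / 4) * (u t x) ^ 4 * (deriv (u t) x) ^ 2) * deriv f x) + 5 * (∫ x : ℝ, (u t x) ^ 2 * deriv (u t) x * deriv (deriv (u t)) x * deriv (deriv f) x) + (1 / 2) * ∫ x : ℝ, (deriv (deriv (u t)) x) ^ 2 * deriv (deriv (deriv f)) x := by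
    rw [e1, e2, e3, e4, e5] at hzero
    linarith
  rw [hsplit] at hmain
  exact hmain
end

section
/- Let H be a real Hilbert space, Q : H → ℝ a continuous quadratic form with associated bounded symmetric bilinear form, K₁, K₂ ∈ H linearly independent vectors in the kernel of Q (i.e., the associated self-adjoint operator annihilates K₁ and K₂), and B ∈ H. Assume there exists μ > 0 such that Q[ε] ≥ μ‖ε‖² − (1/μ)⟨ε,B⟩² for all ε ∈ H with ⟨ε,K₁⟩ = ⟨ε,K₂⟩ = 0, and assume ⟨B,K₁⟩ = ⟨B,K₂⟩ = 0. Then there exists ν > 0 such that for all ε ∈ H with |⟨ε,K₁⟩| + |⟨ε,K₂⟩| < ν‖ε‖, one has Q[ε] ≥ (μ/4)‖ε‖² − (4/μ)⟨ε,B⟩². -/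
/-! Split `ε = p + e` with `p` the orthogonal projection of `ε` onto `V = span {K₁, K₂}`. As `V`
lies in the kernel of `Q` and `b ⊥ V`, we have `Q ε ε = Q e e` and `⟪ε, b⟫ = ⟪e, b⟫`, so exact
coercivity applied to `e ⊥ V` gives `Q ε ε ≥ μ ‖e‖² - μ⁻¹ ⟪ε, b⟫²`. On the finite-dimensional
space `V` the functionals `⟪·, K₁⟫`, `⟪·, K₂⟫` jointly control the norm, so
`‖p‖ ≤ C (|⟪ε, K₁⟫| + |⟪ε, K₂⟫|) ≤ ‖ε‖ / 2` for `ν = (2C)⁻¹`, whence `‖e‖² ≥ ¾ ‖ε‖²`. -/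

open RealInnerProductSpace

open Submodule Set

section

variable {H : Type*} [NormedAddCommGroup H] [InnerProductSpace ℝ H]

instance {ι : Type*} [Finite ι] (K : ι → H) : FiniteDimensional ℝ (span ℝ (range K)) :=
  FiniteDimensional.span_of_finite ℝ (finite_range K)

theorem mem_orthogonal_span_range_iff {ι : Type*} (K : ι → H) (x : H) :
    x ∈ (span ℝ (range K))ᗮ ↔ ∀ i, ⟪x, K i⟫ = 0 := by
  refine ⟨fun hx i ↦ inner_left_of_mem_orthogonal (subset_span (mem_range_self i)) hx, fun h ↦ ?_⟩
  have hle : span ℝ (range K) ≤ (ℝ ∙ x)ᗮ :=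
    span_le.mpr <| by
      rintro _ ⟨i, rfl⟩
      exact mem_orthogonal_singleton_iff_inner_right.mpr (h i)
  exact (mem_orthogonal' _ x).mpr fun u hu ↦ mem_orthogonal_singleton_iff_inner_right.mp (hle hu)

theorem exists_norm_starProjection_le_sum_abs_inner {ι : Type*} [Fintype ι] (K : ι → H) :
    ∃ C > 0, ∀ x : H,
      ‖(span ℝ (range K)).starProjection x‖ ≤ C * ∑ i, |⟪x, K i⟫| := by
  set V := span ℝ (range K)
  let T : V →ₗ[ℝ] ι → ℝ :=
    { toFun := fun p i ↦ ⟪(p : H), K i⟫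
      map_add' := fun p q ↦ by ext; simp [inner_add_left]
      map_smul' := fun c p ↦ by ext; simp [real_inner_smul_left] }
  have hT : LinearMap.ker T = ⊥ := by
    refine LinearMap.ker_eq_bot'.mpr fun p hp ↦ ?_
    have hp' : (p : H) ∈ Vᗮ := (mem_orthogonal_span_range_iff K p).mpr (congrFun hp)
    exact Subtype.ext <| inner_self_eq_zero.mp (inner_right_of_mem_orthogonal p.2 hp')
  obtain ⟨C, hC, hCT⟩ := T.exists_antilipschitzWith hT
  refine ⟨C, hC, fun x ↦ ?_⟩
  have hTx : T (V.orthogonalProjectionOnto x) = fun i ↦ ⟪x, K i⟫ := by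
    ext i
    have hKi : K i ∈ V := subset_span (mem_range_self i)
    change ⟪V.starProjection x, K i⟫ = ⟪x, K i⟫
    rw [inner_starProjection_left_eq_right, starProjection_eq_self_iff.mpr hKi]
  calc ‖V.starProjection x‖ = ‖V.orthogonalProjectionOnto x‖ := rfl
    _ ≤ C * ‖T (V.orthogonalProjectionOnto x)‖ := hCT.le_mul_norm (map_zero T) _
    _ ≤ C * ∑ i, |⟪x, K i⟫| := by
      gcongr
      rw [hTx]
      exact (pi_norm_le_iff_of_nonneg (by positivity)).mpr fun i ↦
        (Real.norm_eq_abs _).trans_le <|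
          Finset.single_le_sum (f := fun j ↦ |⟪x, K j⟫|) (fun j _ ↦ abs_nonneg _)
            (Finset.mem_univ i)

theorem apply_add_apply_add_of_apply_eq_zero (Q : H →L[ℝ] H →L[ℝ] ℝ)
    (hsymm : ∀ x y : H, Q x y = Q y x) {k : H} (hk : Q k = 0) (x : H) :
    Q (x + k) (x + k) = Q x x := by
  simp [hk, hsymm x k]

theorem le_apply_self_of_coercive_on_orthogonal (Q : H →L[ℝ] H →L[ℝ] ℝ)
    (hsymm : ∀ x y : H, Q x y = Q y x) {V : Submodule ℝ H} [V.HasOrthogonalProjection]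
    (hV : V ≤ LinearMap.ker (Q : H →ₗ[ℝ] H →L[ℝ] ℝ)) {b : H} (hb : b ∈ Vᗮ) {μ : ℝ}
    (hcoer : ∀ e ∈ Vᗮ, μ * ‖e‖ ^ 2 - (1 / μ) * ⟪e, b⟫ ^ 2 ≤ Q e e) (x : H) :
    μ * ‖Vᗮ.starProjection x‖ ^ 2 - (1 / μ) * ⟪x, b⟫ ^ 2 ≤ Q x x := by
  set e := Vᗮ.starProjection x
  have hp : V.starProjection x ∈ V := starProjection_apply_mem _ x
  have hx : x = e + V.starProjection x := by
    rw [add_comm, starProjection_add_starProjection_orthogonal]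
  have hQ : Q x x = Q e e := by
    rw [hx, apply_add_apply_add_of_apply_eq_zero Q hsymm (hV hp)]
  have hxb : ⟪x, b⟫ = ⟪e, b⟫ := by
    rw [hx, inner_add_left, inner_right_of_mem_orthogonal hp hb, add_zero]
  rw [hQ, hxb]
  exact hcoer e (starProjection_apply_mem _ x)

end

theorem coercivity_almost_orthogonality_general {H : Type*} [NormedAddCommGroup H]
    [InnerProductSpace ℝ H]
    (Q : H →L[ℝ] H →L[ℝ] ℝ) (hsymm : ∀ x y : H, Q x y = Q y x)
    (K₁ K₂ b : H)
    (hker₁ : ∀ y : H, Q K₁ y = 0) (hker₂ : ∀ y : H, Q K₂ y = 0)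
    (μ : ℝ) (hμ : 0 < μ)
    (hcoer : ∀ ε : H, ⟪ε, K₁⟫ = 0 → ⟪ε, K₂⟫ = 0 →
      Q ε ε ≥ μ * ‖ε‖ ^ 2 - (1 / μ) * ⟪ε, b⟫ ^ 2)
    (hb₁ : ⟪b, K₁⟫ = 0) (hb₂ : ⟪b, K₂⟫ = 0) :
    ∃ ν > (0 : ℝ), ∀ ε : H, |⟪ε, K₁⟫| + |⟪ε, K₂⟫| < ν * ‖ε‖ →
      Q ε ε ≥ (μ / 4) * ‖ε‖ ^ 2 - (4 / μ) * ⟪ε, b⟫ ^ 2 := by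
  set V := span ℝ (range ![K₁, K₂])
  have hV (x : H) : x ∈ Vᗮ ↔ ⟪x, K₁⟫ = 0 ∧ ⟪x, K₂⟫ = 0 := by
    simp only [V, mem_orthogonal_span_range_iff, Fin.forall_fin_two, Matrix.cons_val_zero,
      Matrix.cons_val_one]
  have hVQ : V ≤ LinearMap.ker (Q : H →ₗ[ℝ] H →L[ℝ] ℝ) :=
    span_le.mpr <| range_subset_iff.mpr fun i ↦ by fin_cases i <;> ext <;> simp [hker₁, hker₂]
  obtain ⟨C, hC, hPC⟩ := exists_norm_starProjection_le_sum_abs_inner ![K₁, K₂]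
  refine ⟨(2 * C)⁻¹, by positivity, fun ε hε ↦ ?_⟩
  have hsmall : ‖V.starProjection ε‖ ≤ ‖ε‖ / 2 :=
    calc ‖V.starProjection ε‖ ≤ C * (|⟪ε, K₁⟫| + |⟪ε, K₂⟫|) := by
          simpa only [Fin.sum_univ_two, Matrix.cons_val_zero, Matrix.cons_val_one] using hPC ε
      _ ≤ C * ((2 * C)⁻¹ * ‖ε‖) := by gcongr
      _ = ‖ε‖ / 2 := by field_simp
  have hQ := le_apply_self_of_coercive_on_orthogonal Q hsymm hVQ ((hV b).mpr ⟨hb₁, hb₂⟩)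
    (fun e he ↦ hcoer e ((hV e).mp he).1 ((hV e).mp he).2) ε
  have hpyth := norm_sq_eq_add_norm_sq_starProjection ε V
  have h1 : μ / 4 * ‖ε‖ ^ 2 ≤ μ * ‖Vᗮ.starProjection ε‖ ^ 2 := by
    nlinarith [pow_le_pow_left₀ (norm_nonneg _) hsmall 2]
  have h2 : 1 / μ * ⟪ε, b⟫ ^ 2 ≤ 4 / μ * ⟪ε, b⟫ ^ 2 := by gcongr; norm_num
  linarith

theorem coercivity_almost_orthogonality {H : Type*} [NormedAddCommGroup H]
    [InnerProductSpace ℝ H] [CompleteSpace H]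
    (Q : H →L[ℝ] H →L[ℝ] ℝ) (hsymm : ∀ x y : H, Q x y = Q y x)
    (K₁ K₂ b : H) (hind : LinearIndependent ℝ ![K₁, K₂])
    (hker₁ : ∀ y : H, Q K₁ y = 0) (hker₂ : ∀ y : H, Q K₂ y = 0)
    (μ : ℝ) (hμ : 0 < μ)
    (hcoer : ∀ ε : H, ⟪ε, K₁⟫ = 0 → ⟪ε, K₂⟫ = 0 →
      Q ε ε ≥ μ * ‖ε‖ ^ 2 - (1 / μ) * ⟪ε, b⟫ ^ 2)
    (hb₁ : ⟪b, K₁⟫ = 0) (hb₂ : ⟪b, K₂⟫ = 0) :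
    ∃ ν > (0 : ℝ), ∀ ε : H, |⟪ε, K₁⟫| + |⟪ε, K₂⟫| < ν * ‖ε‖ →
      Q ε ε ≥ (μ / 4) * ‖ε‖ ^ 2 - (4 / μ) * ⟪ε, b⟫ ^ 2 :=
  coercivity_almost_orthogonality_general Q hsymm K₁ K₂ b hker₁ hker₂ μ hμ hcoer hb₁ hb₂
end
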